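/- arXiv:2412.04032 — 5 statements merged into one kernel-verified Lean document; each statement's English description precedes it below -/
import Mathlib

section
/- For every ε ∈ (0,1), every N ≥ 2 and every integer K with N/2 < K < N: max(θ_{N,K}(ε), τ^ℰ_{N,K}(ε)) ≤ τ_{N,K}(ε) ≤ θ_{N,K}(ε/2) + τ^ℰ_{N,K}(ε/2). -/
open scoped Classical BigOperators

noncomputable section

/-- A particle configuration on the discrete circle `ℤ/Mℤ`. -/
abbrev Conf (M : ℕ) := ZMod M → Bool

/-- Number of occupied sites (particles) of a configuration. -/
def numParticles {M : ℕ} [NeZero M] (η : Conf M) : ℕ :=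
  (Finset.univ.filter fun x => η x = true).card

/-- Ergodicity: every pair of neighbouring sites carries at least one particle. -/
def isErgodic {M : ℕ} (η : Conf M) : Prop :=
  ∀ x : ZMod M, η x = true ∨ η (x + 1) = true

/-- The configuration `η` with the values at `x` and `y` exchanged. -/
def swapConf {α : Type*} [DecidableEq α] (η : α → Bool) (x y : α) : α → Bool :=
  fun z => if z = x then η y else if z = y then η x else η z

/-- Number of pairs `(x, z)`, `z ∈ {−1, +1}`, with `η_{x−z} = η_x = 1`, `η_{x+z} = 0` and
`η^{x,x+z} = η'`. -/
def jumpCount {N : ℕ} [NeZero N] (η η' : Conf N) : ℕ :=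
  (Finset.univ.filter fun p : ZMod N × Bool =>
    letI x := p.1
    letI z : ZMod N := if p.2 then 1 else -1
    η (x - z) = true ∧ η x = true ∧ η (x + z) = false ∧ swapConf η x (x + z) = η').card

/-- The configurations with exactly `K` particles, as a type. -/
abbrev GammaT (N K : ℕ) [NeZero N] := {η : Conf N // numParticles η = K}

/-- The FEP generator, as a matrix indexed by `Γ_{N,K}`. -/
def genFEP (N K : ℕ) [NeZero N] : Matrix (GammaT N K) (GammaT N K) ℝ :=
  fun η η' =>
    if η' = η then -(∑ η'' ∈ Finset.univ.filter (fun η'' => η'' ≠ η), (jumpCount η.1 η''.1 : ℝ))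
    else (jumpCount η.1 η'.1 : ℝ)

/-- The distribution at time `t` of the FEP started from `η`:  the row `η` of `exp (t Q)`. -/
def Pt (N K : ℕ) [NeZero N] (t : ℝ) (η : GammaT N K) : GammaT N K → ℝ :=
  fun η' => NormedSpace.exp (t • genFEP N K) η η'

/-- Total variation distance between two (probability) vectors on a finite set. -/
def dTV {S : Type*} [Fintype S] (p q : S → ℝ) : ℝ :=
  (∑ s, |p s - q s|) / 2

/-- The ergodic configurations with `K` particles, as a finset. -/
def ergoFinset (N K : ℕ) [NeZero N] : Finset (GammaT N K) :=
  Finset.univ.filter fun η => isErgodic η.1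

/-- The uniform probability measure on `ℰ_{N,K}`, extended by `0`. -/
def piFEP (N K : ℕ) [NeZero N] : GammaT N K → ℝ :=
  fun η => if isErgodic η.1 then (1 : ℝ) / (ergoFinset N K).card else 0

/-- The `ε`-mixing time of the FEP on `ℤ/Nℤ` with `K` particles. -/
def mixingTime (N K : ℕ) (ε : ℝ) : ℝ :=
  if h : N = 0 then 0 else
    haveI : NeZero N := ⟨h⟩
    sInf {t : ℝ | 0 ≤ t ∧ ∀ η : GammaT N K, dTV (Pt N K t η) (piFEP N K) ≤ ε}

/-- The `ε`-mixing time restricted to initial configurations in the ergodic component. -/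
def ergoMixingTime (N K : ℕ) (ε : ℝ) : ℝ :=
  if h : N = 0 then 0 else
    haveI : NeZero N := ⟨h⟩
    sInf {t : ℝ | 0 ≤ t ∧ ∀ η : GammaT N K, isErgodic η.1 → dTV (Pt N K t η) (piFEP N K) ≤ ε}

/-- The `ε`-transience time: the time needed for the mass of the transient set to drop
below `ε`, uniformly over the initial configuration. -/
def transienceTime (N K : ℕ) (ε : ℝ) : ℝ :=
  if h : N = 0 then 0 else
    haveI : NeZero N := ⟨h⟩
    sInf {t : ℝ | 0 ≤ t ∧ ∀ η : GammaT N K,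
      ∑ η' ∈ Finset.univ.filter (fun η' : GammaT N K => ¬ isErgodic η'.1), Pt N K t η η' ≤ ε}

end

/-!
The three times are infima of sets of admissible times. Mixing within `ε` forces the transient
mass below `ε`, because `π` vanishes on `𝒯`, and in particular mixing from ergodic starts; this
gives the lower bound. By Chapman–Kolmogorov `P_{s+t}^η = ∑_μ P_s^η(μ) P_t^μ`, so by convexity
of `d_TV` the distance at time `s + t` is at most the transient mass at time `s` plus the worst
ergodic distance at time `t`; this gives the upper bound.

Both bounds need the sets to be nonempty, i.e. the chain must actually mix. Jumps never create
a pair of adjacent holes, so `ℰ` is closed; jump counts are symmetric on `ℰ`, so `π` is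
stationary. Every configuration reaches the ergodic configuration with holes at
`0, 2, …, 2 (N - K - 1)`: first the pairs of adjacent holes are filled by pushing pairs of
adjacent particles into them, then holes slide towards `0`. So `exp Q` charges that configuration
from every start, and Doeblin's argument gives geometric convergence to `π`.
-/

open NormedSpace Matrix

namespace Matrix

variable {ι : Type*} [DecidableEq ι]

theorem le_add_smul_one_apply {A : Matrix ι ι ℝ} {c : ℝ} (hc : 0 ≤ c) (i j : ι) :
    A i j ≤ (A + c • 1) i j := by
  have : 0 ≤ c * (1 : Matrix ι ι ℝ) i j := mul_nonneg hc (by rw [one_apply]; split_ifs <;> norm_num)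
  simpa using this

variable [Fintype ι]

theorem hasSum_exp (A : Matrix ι ι ℝ) :
    HasSum (fun n : ℕ => (n.factorial : ℝ)⁻¹ • A ^ n) (exp A) := by
  let _ : NormedRing (Matrix ι ι ℝ) := Matrix.linftyOpNormedRing
  let _ : NormedAlgebra ℝ (Matrix ι ι ℝ) := Matrix.linftyOpNormedAlgebra
  exact exp_series_hasSum_exp' A

theorem hasSum_exp_apply (A : Matrix ι ι ℝ) (i j : ι) :
    HasSum (fun n : ℕ => (n.factorial : ℝ)⁻¹ * (A ^ n) i j) (exp A i j) :=
  Pi.hasSum.mp (Pi.hasSum.mp (hasSum_exp A) i) j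

theorem exp_mulVec_of_mulVec_eq_zero {A : Matrix ι ι ℝ} {v : ι → ℝ} (hA : A *ᵥ v = 0) :
    exp A *ᵥ v = v := by
  have h := (hasSum_exp A).map (mulVec.addMonoidHomLeft v)
    (continuous_id.matrix_mulVec continuous_const)
  refine h.unique ((hasSum_ite_eq 0 v).congr_fun fun n => ?_)
  rcases n with _ | n
  · simp [mulVec.addMonoidHomLeft]
  · simp [mulVec.addMonoidHomLeft, pow_succ, ← mulVec_mulVec, hA, smul_mulVec]

theorem vecMul_exp_of_vecMul_eq_zero {A : Matrix ι ι ℝ} {v : ι → ℝ} (hA : v ᵥ* A = 0) :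
    v ᵥ* exp A = v := by
  rw [← mulVec_transpose, ← exp_transpose]
  exact exp_mulVec_of_mulVec_eq_zero (by rwa [mulVec_transpose])

theorem exp_apply_nonneg_of_nonneg {A : Matrix ι ι ℝ} (hA : ∀ i j, 0 ≤ A i j) (i j : ι) :
    0 ≤ exp A i j :=
  (hasSum_exp_apply A i j).nonneg fun n => by
    have := pow_apply_nonneg hA n i j
    positivity

theorem exp_eq_smul_exp_add_smul_one (A : Matrix ι ι ℝ) (c : ℝ) :
    exp A = Real.exp (-c) • exp (A + c • 1) := by
  let _ : NormedRing (Matrix ι ι ℝ) := Matrix.linftyOpNormedRing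
  let _ : NormedAlgebra ℝ (Matrix ι ι ℝ) := Matrix.linftyOpNormedAlgebra
  have hscalar : exp ((-c) • (1 : Matrix ι ι ℝ)) = Real.exp (-c) • 1 := by
    rw [← Algebra.algebraMap_eq_smul_one, ← Algebra.algebraMap_eq_smul_one, Real.exp_eq_exp_ℝ,
      algebraMap_exp_comm]
    rfl
  rw [← smul_one_mul, ← hscalar, ← exp_add_of_commute _ _ ((Commute.one_left _).smul_left _)]
  congr 1
  module

theorem add_smul_one_apply_nonneg {A : Matrix ι ι ℝ} (hA : ∀ i j, i ≠ j → 0 ≤ A i j) (i j : ι) :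
    0 ≤ (A + (∑ k, |A k k|) • 1) i j := by
  rcases eq_or_ne i j with rfl | hij
  · have := Finset.single_le_sum (fun k _ => abs_nonneg (A k k)) (Finset.mem_univ i)
    simp only [add_apply, smul_apply, one_apply_eq, smul_eq_mul, mul_one]
    linarith [neg_abs_le (A i i)]
  · exact (hA i j hij).trans (le_add_smul_one_apply (by positivity) i j)

theorem exp_apply_nonneg {A : Matrix ι ι ℝ} (hA : ∀ i j, i ≠ j → 0 ≤ A i j) (i j : ι) :
    0 ≤ exp A i j := by
  rw [exp_eq_smul_exp_add_smul_one A (∑ k, |A k k|), smul_apply, smul_eq_mul]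
  exact mul_nonneg (Real.exp_nonneg _)
    (exp_apply_nonneg_of_nonneg (add_smul_one_apply_nonneg hA) i j)

theorem exp_mem_rowStochastic {A : Matrix ι ι ℝ} (hA : ∀ i j, i ≠ j → 0 ≤ A i j)
    (hA1 : A *ᵥ 1 = 0) : exp A ∈ rowStochastic ℝ ι :=
  ⟨exp_apply_nonneg hA, exp_mulVec_of_mulVec_eq_zero hA1⟩

theorem exists_pow_apply_pos {B : Matrix ι ι ℝ} (hB : ∀ i j, 0 ≤ B i j) {i j : ι}
    (h : Relation.ReflTransGen (fun a b => 0 < B a b) i j) : ∃ n, 0 < (B ^ n) i j := by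
  induction h with
  | refl => exact ⟨0, by simp⟩
  | @tail k l _ hkl ih =>
    obtain ⟨n, hn⟩ := ih
    refine ⟨n + 1, ?_⟩
    rw [pow_succ, mul_apply]
    exact Finset.sum_pos' (fun m _ => mul_nonneg (pow_apply_nonneg hB n i m) (hB m l))
      ⟨k, Finset.mem_univ k, mul_pos hn hkl⟩

theorem exp_apply_pos {A : Matrix ι ι ℝ} (hA : ∀ i j, i ≠ j → 0 ≤ A i j) {i j : ι}
    (h : Relation.ReflTransGen (fun a b => 0 < A a b) i j) : 0 < exp A i j := by
  set B := A + (∑ k, |A k k|) • 1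
  have hB := add_smul_one_apply_nonneg hA
  obtain ⟨n, hn⟩ := exists_pow_apply_pos hB
    (Relation.ReflTransGen.mono (fun a b hab => hab.trans_le
      (le_add_smul_one_apply (by positivity) a b)) i j h)
  have hexpB : 0 < exp B i j := by
    refine lt_of_lt_of_le ?_ (le_hasSum (hasSum_exp_apply B i j) n fun m _ =>
      mul_nonneg (by positivity) (pow_apply_nonneg hB m i j))
    positivity
  rw [exp_eq_smul_exp_add_smul_one A (∑ k, |A k k|), smul_apply, smul_eq_mul]
  exact mul_pos (Real.exp_pos _) hexpB

end Matrix

section TotalVariation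

variable {ι : Type*} [Fintype ι]

theorem dTV_le_one {p q : ι → ℝ} (hp : ∀ s, 0 ≤ p s) (hq : ∀ s, 0 ≤ q s)
    (hps : ∑ s, p s = 1) (hqs : ∑ s, q s = 1) : dTV p q ≤ 1 := by
  have : ∑ s, |p s - q s| ≤ ∑ s, (p s + q s) := Finset.sum_le_sum fun s _ =>
    abs_sub_le_iff.mpr ⟨by linarith [hq s], by linarith [hp s]⟩
  rw [Finset.sum_add_distrib, hps, hqs] at this
  unfold dTV
  linarith

theorem sum_sub_le_dTV {p q : ι → ℝ} (hsum : ∑ s, p s = ∑ s, q s) (T : Finset ι) :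
    ∑ s ∈ T, (p s - q s) ≤ dTV p q := by
  have hzero : ∑ s ∈ T, (p s - q s) + ∑ s ∈ Tᶜ, (p s - q s) = 0 := by
    rw [Finset.sum_add_sum_compl, Finset.sum_sub_distrib, hsum, sub_self]
  have hT : ∑ s ∈ T, (p s - q s) ≤ ∑ s ∈ T, |p s - q s| :=
    Finset.sum_le_sum fun s _ => le_abs_self _
  have hTc : -∑ s ∈ Tᶜ, (p s - q s) ≤ ∑ s ∈ Tᶜ, |p s - q s| := by
    rw [← Finset.sum_neg_distrib]
    exact Finset.sum_le_sum fun s _ => neg_le_abs _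
  have := Finset.sum_add_sum_compl T fun s => |p s - q s|
  unfold dTV
  linarith

theorem dTV_vecMul_le {p : ι → ℝ} (hp : ∀ i, 0 ≤ p i) (hps : ∑ i, p i = 1)
    (M : Matrix ι ι ℝ) (π : ι → ℝ) :
    dTV (p ᵥ* M) π ≤ ∑ i, p i * dTV (M i) π := by
  have hpoint : ∀ j, |(p ᵥ* M) j - π j| ≤ ∑ i, p i * |M i j - π j| := by
    intro j
    have : (p ᵥ* M) j - π j = ∑ i, p i * (M i j - π j) := by
      simp only [vecMul, dotProduct, mul_sub, Finset.sum_sub_distrib, ← Finset.sum_mul, hps,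
        one_mul]
    rw [this]
    refine (Finset.abs_sum_le_sum_abs _ _).trans_eq (Finset.sum_congr rfl fun i _ => ?_)
    rw [abs_mul, abs_of_nonneg (hp i)]
  calc dTV (p ᵥ* M) π ≤ (∑ j, ∑ i, p i * |M i j - π j|) / 2 := by
        unfold dTV; gcongr with j; exact hpoint j
    _ = ∑ i, p i * dTV (M i) π := by
        rw [Finset.sum_comm, Finset.sum_div]
        simp only [dTV, ← Finset.mul_sum, mul_div_assoc]

theorem dTV_vecMul_le_add {p π : ι → ℝ} (hp : ∀ i, 0 ≤ p i) (hps : ∑ i, p i = 1)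
    (M : Matrix ι ι ℝ) (T : Finset ι) {a b : ℝ} (hb : 0 ≤ b) (hT : ∑ i ∈ T, p i ≤ a)
    (hM : ∀ i ∈ T, dTV (M i) π ≤ 1) (hMc : ∀ i ∉ T, dTV (M i) π ≤ b) :
    dTV (p ᵥ* M) π ≤ a + b := by
  have hin : ∑ i ∈ T, p i * dTV (M i) π ≤ a :=
    (Finset.sum_le_sum fun i hi => mul_le_of_le_one_right (hp i) (hM i hi)).trans hT
  have hout : ∑ i ∈ Tᶜ, p i * dTV (M i) π ≤ b := calc
    _ ≤ ∑ i ∈ Tᶜ, p i * b :=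
        Finset.sum_le_sum fun i hi =>
          mul_le_mul_of_nonneg_left (hMc i (Finset.mem_compl.mp hi)) (hp i)
    _ ≤ ∑ i, p i * b := Finset.sum_le_sum_of_subset_of_nonneg (Finset.subset_univ _)
        fun i _ _ => mul_nonneg (hp i) hb
    _ = b := by rw [← Finset.sum_mul, hps, one_mul]
  calc dTV (p ᵥ* M) π ≤ ∑ i, p i * dTV (M i) π := dTV_vecMul_le hp hps M π
    _ = ∑ i ∈ T, p i * dTV (M i) π + ∑ i ∈ Tᶜ, p i * dTV (M i) π :=
        (Finset.sum_add_sum_compl T _).symm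
    _ ≤ a + b := add_le_add hin hout

variable [DecidableEq ι]

/-- Doeblin's contraction. -/
theorem dTV_vecMul_le_mul {P : Matrix ι ι ℝ} {ν : ι → ℝ} {δ : ℝ}
    (hP : P ∈ rowStochastic ℝ ι) (hmin : ∀ i j, δ * ν j ≤ P i j) (hν : ∑ j, ν j = 1)
    {p q : ι → ℝ} (hpq : ∑ i, p i = ∑ i, q i) :
    dTV (p ᵥ* P) (q ᵥ* P) ≤ (1 - δ) * dTV p q := by
  have hpoint : ∀ j, |(p ᵥ* P) j - (q ᵥ* P) j| ≤ ∑ i, |p i - q i| * (P i j - δ * ν j) := by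
    intro j
    have : (p ᵥ* P) j - (q ᵥ* P) j = ∑ i, (p i - q i) * (P i j - δ * ν j) := by
      simp only [vecMul, dotProduct, mul_sub, sub_mul, Finset.sum_sub_distrib,
        ← Finset.sum_mul, hpq]
      ring
    rw [this]
    refine (Finset.abs_sum_le_sum_abs _ _).trans_eq (Finset.sum_congr rfl fun i _ => ?_)
    rw [abs_mul, abs_of_nonneg (sub_nonneg.mpr (hmin i j))]
  calc dTV (p ᵥ* P) (q ᵥ* P) ≤ (∑ j, ∑ i, |p i - q i| * (P i j - δ * ν j)) / 2 := by
        unfold dTV; gcongr with j; exact hpoint j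
    _ = (1 - δ) * dTV p q := by
        rw [Finset.sum_comm]
        simp only [← Finset.mul_sum, Finset.sum_sub_distrib, sum_row_of_mem_rowStochastic hP,
          hν, mul_one, ← Finset.sum_mul, dTV]
        ring

theorem sum_vecMul_of_mem_rowStochastic {P : Matrix ι ι ℝ} (hP : P ∈ rowStochastic ℝ ι)
    (v : ι → ℝ) : ∑ j, (v ᵥ* P) j = ∑ i, v i := by
  simp only [← dotProduct_one, ← dotProduct_mulVec, one_vecMul_of_mem_rowStochastic hP]

theorem dTV_vecMul_pow_le {P : Matrix ι ι ℝ} {ν : ι → ℝ} {δ : ℝ} (hδ : δ ≤ 1)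
    (hP : P ∈ rowStochastic ℝ ι) (hmin : ∀ i j, δ * ν j ≤ P i j) (hν : ∑ j, ν j = 1)
    {p π : ι → ℝ} (hpπ : ∑ i, p i = ∑ i, π i) (hπ : π ᵥ* P = π) (n : ℕ) :
    dTV (p ᵥ* P ^ n) π ≤ (1 - δ) ^ n * dTV p π := by
  induction n generalizing p with
  | zero => simp
  | succ n ih =>
    have hsum : ∑ i, (p ᵥ* P) i = ∑ i, π i := by rw [sum_vecMul_of_mem_rowStochastic hP, hpπ]
    calc dTV (p ᵥ* P ^ (n + 1)) π = dTV ((p ᵥ* P) ᵥ* P ^ n) π := by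
          rw [pow_succ', vecMul_vecMul]
      _ ≤ (1 - δ) ^ n * dTV (p ᵥ* P) (π ᵥ* P) := by rw [hπ]; exact ih hsum
      _ ≤ (1 - δ) ^ n * ((1 - δ) * dTV p π) := by
          gcongr
          exact dTV_vecMul_le_mul hP hmin hν hpπ
      _ = (1 - δ) ^ (n + 1) * dTV p π := by ring

end TotalVariation

theorem csInf_le_csInf_add_csInf {A B C : Set ℝ} (hA : BddBelow A) (hB : B.Nonempty)
    (hC : C.Nonempty) (h : ∀ b ∈ B, ∀ c ∈ C, b + c ∈ A) : sInf A ≤ sInf B + sInf C := by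
  have hAb : ∀ b ∈ B, sInf A - b ≤ sInf C := fun b hb =>
    le_csInf hC fun c hc => by linarith [csInf_le hA (h b hb c hc)]
  have : sInf A - sInf C ≤ sInf B := le_csInf hB fun b hb => by linarith [hAb b hb]
  linarith

section Swap

variable {α : Type*} [DecidableEq α] (η : α → Bool) {x y w : α}

@[simp] theorem swapConf_apply_left : swapConf η x y x = η y := by simp [swapConf]

theorem swapConf_apply_right (h : y ≠ x) : swapConf η x y y = η x := by simp [swapConf, h]

theorem swapConf_apply_of_ne (hx : w ≠ x) (hy : w ≠ y) : swapConf η x y w = η w := by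
  simp [swapConf, hx, hy]

theorem swapConf_eq_comp_swap (x y : α) : swapConf η x y = η ∘ Equiv.swap x y := by
  funext z
  simp only [swapConf, Function.comp_apply, Equiv.swap_apply_def]
  split_ifs <;> rfl

end Swap

namespace FEP

section

variable {N : ℕ}

theorem one_ne_zero_of_two_le (hN : 2 ≤ N) : (1 : ZMod N) ≠ 0 := by
  have : Fact (1 < N) := ⟨by omega⟩
  exact one_ne_zero

theorem two_ne_zero_of_three_le (hN : 3 ≤ N) : (2 : ZMod N) ≠ 0 := by
  rw [← Nat.cast_ofNat, Ne, ZMod.natCast_eq_zero_iff]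
  exact fun h => by have := Nat.le_of_dvd two_pos h; omega

theorem ne_zero_and_two_mul_ne_zero (hN : 3 ≤ N) {z : ZMod N} (hz : z = 1 ∨ z = -1) :
    z ≠ 0 ∧ 2 * z ≠ 0 := by
  have h1 := one_ne_zero_of_two_le (N := N) (by omega)
  have h2 := two_ne_zero_of_three_le hN
  rcases hz with rfl | rfl <;> simpa using And.intro h1 h2

theorem neighbours_eq_true_of_isErgodic {η : Conf N} (hE : isErgodic η) {y : ZMod N}
    (hy : η y = false) : η (y + 1) = true ∧ η (y - 1) = true := by
  refine ⟨(hE y).resolve_left (by simp [hy]), (hE (y - 1)).resolve_right ?_⟩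
  simp [hy]

def IsJump (η : Conf N) (x z : ZMod N) : Prop :=
  η (x - z) = true ∧ η x = true ∧ η (x + z) = false

theorem IsJump.swapConf_add_one_and_sub_one (hN : 3 ≤ N) {η : Conf N} {x z : ZMod N}
    (hz : z = 1 ∨ z = -1) (h : IsJump η x z) :
    swapConf η x (x + z) (x + 1) = true ∧ swapConf η x (x + z) (x - 1) = true := by
  obtain ⟨hz0, h2z⟩ := ne_zero_and_two_mul_ne_zero hN hz
  have hnear : swapConf η x (x + z) (x + z) = true := by
    rw [swapConf_apply_right _ (by simpa using hz0)]
    exact h.2.1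
  have hfar : swapConf η x (x + z) (x - z) = true := by
    rw [swapConf_apply_of_ne _ (by simpa using hz0)
      (fun he => h2z (by linear_combination -he))]
    exact h.1
  rcases hz with rfl | rfl
  · exact ⟨hnear, hfar⟩
  · exact ⟨by convert hfar using 2; ring, by convert hnear using 2; ring⟩

theorem IsJump.eq_false_of_swapConf_eq_false {η : Conf N} {x z w : ZMod N} (h : IsJump η x z)
    (hw : swapConf η x (x + z) w = false) (hwx : w ≠ x) : η w = false := by
  have hwz : w ≠ x + z := by
    rintro rfl
    rw [swapConf_apply_right _ hwx, h.2.1] at hw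
    exact Bool.noConfusion hw
  rwa [swapConf_apply_of_ne _ hwx hwz] at hw

theorem IsJump.reverse (hN : 3 ≤ N) {η : Conf N} (hE : isErgodic η) {x z : ZMod N}
    (hz : z = 1 ∨ z = -1) (h : IsJump η x z) :
    IsJump (swapConf η x (x + z)) (x + z) (-z) ∧
      swapConf (swapConf η x (x + z)) (x + z) (x + z + -z) = η := by
  obtain ⟨hz0, h2z⟩ := ne_zero_and_two_mul_ne_zero hN hz
  have hxz : x + z ≠ x := by simpa using hz0
  have hbeyond : η (x + z + z) = true := by
    obtain ⟨hplus, hminus⟩ := neighbours_eq_true_of_isErgodic hE h.2.2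
    rcases hz with rfl | rfl
    · exact hplus
    · simpa [← sub_eq_add_neg] using hminus
  refine ⟨⟨?_, ?_, ?_⟩, ?_⟩
  · rw [sub_neg_eq_add, swapConf_apply_of_ne _ (fun he => h2z (by linear_combination he))
      (fun he => hz0 (by linear_combination he))]
    exact hbeyond
  · rw [swapConf_apply_right _ hxz]
    exact h.2.1
  · simpa using h.2.2
  · funext w
    simp only [add_neg_cancel_right, swapConf]
    split_ifs <;> simp_all

/-- The direction `±1` encoded by the boolean in `jumpCount`. -/
def dir (b : Bool) : ZMod N := if b then 1 else -1

theorem dir_eq_one_or_neg_one (b : Bool) : dir (N := N) b = 1 ∨ dir (N := N) b = -1 := by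
  cases b <;> simp [dir]

theorem dir_not (b : Bool) : dir (N := N) (!b) = -dir b := by
  cases b <;> simp [dir]

variable [NeZero N]

def holePairs (η : Conf N) : Finset (ZMod N) :=
  Finset.univ.filter fun y => η y = false ∧ η (y + 1) = false

theorem isErgodic_iff_holePairs_eq_empty {η : Conf N} : isErgodic η ↔ holePairs η = ∅ := by
  simp [isErgodic, holePairs, Finset.filter_eq_empty_iff, or_iff_not_imp_left]

theorem IsJump.holePairs_swapConf_subset (hN : 3 ≤ N) {η : Conf N} {x z : ZMod N}
    (hz : z = 1 ∨ z = -1) (h : IsJump η x z) :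
    holePairs (swapConf η x (x + z)) ⊆ holePairs η := by
  obtain ⟨hplus, hminus⟩ := h.swapConf_add_one_and_sub_one hN hz
  intro y hy
  simp only [holePairs, Finset.mem_filter, Finset.mem_univ, true_and] at hy ⊢
  have hyx : y ≠ x := by rintro rfl; simp_all
  have hy1x : y + 1 ≠ x := by rintro rfl; simp_all
  exact ⟨h.eq_false_of_swapConf_eq_false hy.1 hyx, h.eq_false_of_swapConf_eq_false hy.2 hy1x⟩

theorem IsJump.isErgodic_swapConf (hN : 3 ≤ N) {η : Conf N} (hE : isErgodic η) {x z : ZMod N}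
    (hz : z = 1 ∨ z = -1) (h : IsJump η x z) : isErgodic (swapConf η x (x + z)) := by
  rw [isErgodic_iff_holePairs_eq_empty] at hE ⊢
  exact Finset.subset_empty.mp (hE ▸ h.holePairs_swapConf_subset hN hz)

theorem numParticles_swapConf (η : Conf N) (x y : ZMod N) :
    numParticles (swapConf η x y) = numParticles η :=
  Finset.card_equiv (Equiv.swap x y) (by simp [swapConf_eq_comp_swap])

theorem jumpCount_eq_card (η η' : Conf N) :
    jumpCount η η' = (Finset.univ.filter fun p : ZMod N × Bool =>
      IsJump η p.1 (dir p.2) ∧ swapConf η p.1 (p.1 + dir p.2) = η').card := by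
  unfold jumpCount
  congr 1
  ext p
  simp [IsJump, dir, and_assoc]

theorem jumpCount_ne_zero_iff {η η' : Conf N} : jumpCount η η' ≠ 0 ↔
    ∃ x z, (z = 1 ∨ z = -1) ∧ IsJump η x z ∧ swapConf η x (x + z) = η' := by
  rw [jumpCount_eq_card, Finset.card_ne_zero]
  constructor
  · rintro ⟨⟨x, b⟩, hp⟩
    simp only [Finset.mem_filter, Finset.mem_univ, true_and] at hp
    exact ⟨x, dir b, dir_eq_one_or_neg_one b, hp⟩
  · rintro ⟨x, z, rfl | rfl, hp⟩
    · exact ⟨(x, true), Finset.mem_filter.mpr ⟨Finset.mem_univ _, hp⟩⟩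
    · exact ⟨(x, false), Finset.mem_filter.mpr ⟨Finset.mem_univ _, hp⟩⟩

theorem jumpCount_le_jumpCount (hN : 3 ≤ N) {η η' : Conf N} (hE : isErgodic η) :
    jumpCount η η' ≤ jumpCount η' η := by
  rw [jumpCount_eq_card, jumpCount_eq_card]
  refine Finset.card_le_card_of_injOn (fun p => (p.1 + dir p.2, !p.2)) ?_ ?_
  · rintro ⟨x, b⟩ hp
    simp only [Finset.coe_filter, Finset.mem_univ, true_and, Set.mem_ofPred_eq] at hp ⊢
    obtain ⟨hj, rfl⟩ := hp
    rw [dir_not]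
    exact hj.reverse hN hE (dir_eq_one_or_neg_one b)
  · rintro ⟨x, b⟩ - ⟨y, c⟩ - hxy
    simp only [Prod.mk.injEq, Bool.not_inj_iff] at hxy
    obtain ⟨hxy, rfl⟩ := hxy
    simpa using hxy

theorem jumpCount_comm (hN : 3 ≤ N) {η η' : Conf N} (hE : isErgodic η) (hE' : isErgodic η') :
    jumpCount η η' = jumpCount η' η :=
  (jumpCount_le_jumpCount hN hE).antisymm (jumpCount_le_jumpCount hN hE')

def Step (η η' : Conf N) : Prop := jumpCount η η' ≠ 0

theorem step_swapConf {η : Conf N} {x z : ZMod N} (hz : z = 1 ∨ z = -1) (h : IsJump η x z) :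
    Step η (swapConf η x (x + z)) :=
  jumpCount_ne_zero_iff.mpr ⟨x, z, hz, h, rfl⟩

theorem Step.numParticles_eq {η η' : Conf N} (h : Step η η') :
    numParticles η' = numParticles η := by
  obtain ⟨x, z, -, -, rfl⟩ := jumpCount_ne_zero_iff.mp h
  exact numParticles_swapConf η x (x + z)

theorem Step.isErgodic (hN : 3 ≤ N) {η η' : Conf N} (hE : isErgodic η) (h : Step η η') :
    isErgodic η' := by
  obtain ⟨x, z, hz, hj, rfl⟩ := jumpCount_ne_zero_iff.mp h
  exact hj.isErgodic_swapConf hN hE hz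

theorem Step.ne {η η' : Conf N} (h : Step η η') : η ≠ η' := by
  obtain ⟨x, z, -, hj, rfl⟩ := jumpCount_ne_zero_iff.mp h
  intro he
  have := congrFun he x
  rw [swapConf_apply_left, hj.2.1, hj.2.2] at this
  exact Bool.noConfusion this

end

section

variable {N : ℕ}

theorem eq_of_natCast_eq_of_lt {a b : ℕ} (ha : a < N) (hb : b < N)
    (h : (a : ZMod N) = b) : a = b := by
  rw [← ZMod.val_cast_of_lt ha, ← ZMod.val_cast_of_lt hb, h]

variable [NeZero N]

theorem val_sub_one_lt {h : ZMod N} (hh : h ≠ 0) : (h - 1).val < h.val := by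
  have hpos : 0 < h.val := (ZMod.val_pos).mpr hh
  have : h - 1 = ((h.val - 1 : ℕ) : ZMod N) := by
    rw [Nat.cast_sub hpos, ZMod.natCast_zmod_val, Nat.cast_one]
  rw [this, ZMod.val_cast_of_lt (by have := ZMod.val_lt h; omega)]
  omega

theorem card_filter_eq_false (η : Conf N) :
    (Finset.univ.filter fun x => η x = false).card = N - numParticles η := by
  have hcompl := Finset.card_compl (Finset.univ.filter fun x : ZMod N => η x = true)
  rw [ZMod.card] at hcompl
  rw [numParticles, ← hcompl]
  congr 1
  ext x
  simp

theorem exists_adjacent_particles {η : Conf N} (hK : N < 2 * numParticles η) :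
    ∃ x, η (x - 1) = true ∧ η x = true := by
  by_contra! hno
  have hinj : (Finset.univ.filter fun x => η x = true).card ≤
      (Finset.univ.filter fun x => η x = false).card :=
    Finset.card_le_card_of_injOn (· + 1)
      (fun x hx => by simpa using hno (x + 1) (by simpa using hx))
      (fun x _ y _ hxy => add_right_cancel hxy)
  rw [card_filter_eq_false] at hinj
  exact absurd hinj (by unfold numParticles at hK ⊢; omega)

theorem numParticles_eq_of_reflTransGen {η η' : Conf N} (h : Relation.ReflTransGen Step η η') :
    numParticles η' = numParticles η := by
  induction h with
  | refl => rfl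
  | tail _ hstep ih => rw [hstep.numParticles_eq, ih]

/-- The particle pair at `x - 1, x` is pushed rightwards, two sites per jump, until it runs
into a pair of holes; the induction is on the distance from `x` to the hole pair `a, a + 1`. -/
theorem exists_reflTransGen_card_holePairs_lt (hN : 3 ≤ N) {η : Conf N} {a x : ZMod N}
    (ha : η a = false) (ha1 : η (a + 1) = false) (hx1 : η (x - 1) = true) (hx : η x = true) :
    ∃ η', Relation.ReflTransGen Step η η' ∧ (holePairs η').card < (holePairs η).card := by
  induction hn : (a - x).val using Nat.strong_induction_on generalizing η x with
  | _ n ih =>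
  subst hn
  have hax : a - x ≠ 0 := sub_ne_zero.mpr (by rintro rfl; simp_all)
  by_cases hnext : η (x + 1) = true
  · refine ih _ ?_ ha ha1 (by simpa using hx) hnext rfl
    simpa [sub_add_eq_sub_sub] using val_sub_one_lt hax
  have hj : IsJump η x 1 := ⟨hx1, hx, by simpa using hnext⟩
  have hsub := hj.holePairs_swapConf_subset hN (Or.inl rfl)
  have hplus := (hj.swapConf_add_one_and_sub_one hN (Or.inl rfl)).1
  by_cases hnext2 : η (x + 1 + 1) = true
  · have h1 := one_ne_zero_of_two_le (N := N) (by omega)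
    have h2 := two_ne_zero_of_three_le hN
    have hax1 : a ≠ x + 1 := by rintro rfl; simp_all
    obtain ⟨η', hreach, hlt⟩ := ih ((a - (x + 1 + 1)).val) (η := swapConf η x (x + 1))
      (x := x + 1 + 1)
      (calc (a - (x + 1 + 1)).val = (a - x - 1 - 1).val := by congr 1; ring
        _ < (a - x - 1).val := val_sub_one_lt (by rwa [sub_sub, sub_ne_zero])
        _ < (a - x).val := val_sub_one_lt hax)
      (by rwa [swapConf_apply_of_ne _ (by rintro rfl; simp_all) hax1])
      (by rwa [swapConf_apply_of_ne _ (by rintro rfl; simp_all)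
        (fun he => hax (sub_eq_zero.mpr (by simpa using he)))])
      (by simpa using hplus)
      (by rwa [swapConf_apply_of_ne _ (fun he => h2 (by linear_combination he))
        (fun he => h1 (by linear_combination he))]) rfl
    exact ⟨η', .head (step_swapConf (Or.inl rfl) hj) hreach,
      hlt.trans_le (Finset.card_le_card hsub)⟩
  · refine ⟨_, .single (step_swapConf (Or.inl rfl) hj), Finset.card_lt_card ?_⟩
    refine (Finset.ssubset_iff_of_subset hsub).mpr ⟨x + 1, ?_, ?_⟩
    · simp_all [holePairs]
    · simp [holePairs, hplus]

theorem exists_reflTransGen_isErgodic (hN : 3 ≤ N) {η : Conf N} (hK : N < 2 * numParticles η) :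
    ∃ ξ, Relation.ReflTransGen Step η ξ ∧ isErgodic ξ := by
  induction hn : (holePairs η).card using Nat.strong_induction_on generalizing η with
  | _ n ih =>
  subst hn
  by_cases hE : isErgodic η
  · exact ⟨η, .refl, hE⟩
  obtain ⟨a, ha, ha1⟩ : ∃ a, η a = false ∧ η (a + 1) = false := by
    simpa [isErgodic] using hE
  obtain ⟨x, hx1, hx⟩ := exists_adjacent_particles hK
  obtain ⟨η', hreach, hlt⟩ := exists_reflTransGen_card_holePairs_lt hN ha ha1 hx1 hx
  obtain ⟨ξ, hreach', hξ⟩ :=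
    ih _ hlt (by rwa [numParticles_eq_of_reflTransGen hreach]) rfl
  exact ⟨ξ, hreach.trans hreach', hξ⟩

end

section

variable {N K : ℕ}

def starHoles (N K : ℕ) : Finset (ZMod N) :=
  (Finset.range (N - K)).image fun j => ((2 * j : ℕ) : ZMod N)

def starConf (N K : ℕ) : Conf N := fun x => decide (x ∉ starHoles N K)

theorem card_starHoles (hK : N < 2 * K) : (starHoles N K).card = N - K := by
  rw [starHoles, Finset.card_image_of_injOn, Finset.card_range]
  intro i hi j hj hij
  simp only [Finset.coe_range, Set.mem_Iio] at hi hj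
  have := eq_of_natCast_eq_of_lt (by omega) (by omega) hij
  omega

theorem isErgodic_starConf (hK : N < 2 * K) : isErgodic (starConf N K) := by
  intro x
  by_contra! hx
  simp only [starConf, ne_eq, decide_eq_true_eq, not_not, starHoles, Finset.mem_image,
    Finset.mem_range] at hx
  obtain ⟨⟨i, hi, rfl⟩, ⟨j, hj, hij⟩⟩ := hx
  have := eq_of_natCast_eq_of_lt (N := N) (a := 2 * i + 1) (b := 2 * j) (by omega) (by omega)
    (by push_cast at hij ⊢; exact hij.symm)
  omega

variable [NeZero N]

theorem numParticles_starConf (hK : N < 2 * K) (hKN : K ≤ N) :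
    numParticles (starConf N K) = K := by
  have hcompl := Finset.card_compl (starHoles N K)
  rw [ZMod.card, card_starHoles hK] at hcompl
  rw [numParticles, show (Finset.univ.filter fun x => starConf N K x = true) = (starHoles N K)ᶜ by
    ext; simp [starConf], hcompl]
  omega

theorem subset_starHoles (hK : N < 2 * K) {S : Finset (ZMod N)} (hS : S.card = N - K)
    (hstep : ∀ h ∈ S, h ≠ 0 → h - 2 ∈ S) : S ⊆ starHoles N K := by
  have hN := NeZero.pos N
  intro h hh
  by_contra hnot
  have hchain : ∀ i ≤ N - K, h - ((2 * i : ℕ) : ZMod N) ∈ S := by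
    intro i
    induction i with
    | zero => simpa using hh
    | succ i ih =>
      intro hi
      have hne : h - ((2 * i : ℕ) : ZMod N) ≠ 0 := fun he => hnot (Finset.mem_image.mpr
        ⟨i, Finset.mem_range.mpr (by omega), (sub_eq_zero.mp he).symm⟩)
      convert hstep _ (ih (by omega)) hne using 1
      push_cast
      ring
  have hcard := Finset.card_le_card_of_injOn (s := Finset.range (N - K + 1)) (t := S)
    (fun i => h - ((2 * i : ℕ) : ZMod N))
    (fun i hi => hchain i (by simp only [Finset.coe_range, Set.mem_Iio] at hi; omega))
    (fun i hi j hj hij => by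
      simp only [Finset.coe_range, Set.mem_Iio] at hi hj
      have := eq_of_natCast_eq_of_lt (N := N) (a := 2 * i) (b := 2 * j) (by omega) (by omega)
        (sub_right_injective hij)
      omega)
  simp only [Finset.card_range] at hcard
  omega

theorem eq_starConf (hK : N < 2 * K) {η : Conf N} (hcnt : numParticles η = K)
    (hstuck : ∀ h, η h = false → h ≠ 0 → η (h - 2) = false) : η = starConf N K := by
  set S := Finset.univ.filter fun x => η x = false with hSdef
  have hS : S.card = N - K := by rw [card_filter_eq_false, hcnt]
  have heq : S = starHoles N K :=
    Finset.eq_of_subset_of_card_le (subset_starHoles hK hS (by simpa [hSdef] using hstuck))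
      (by rw [card_starHoles hK, hS])
  funext x
  have hx := congrArg (x ∈ ·) heq
  simp only [hSdef, Finset.mem_filter, Finset.mem_univ, true_and, eq_iff_iff] at hx
  simp only [starConf, ← hx]
  cases η x <;> simp

def holeSum (η : Conf N) : ℕ := ∑ x, if η x = true then 0 else x.val

theorem holeSum_swapConf_lt {η : Conf N} {x : ZMod N} (hx : η x = true) (hx1 : η (x + 1) = false)
    (hne : x + 1 ≠ 0) : holeSum (swapConf η x (x + 1)) < holeSum η := by
  have hx1x : x + 1 ≠ x := fun he => by
    have h10 : (1 : ZMod N) = 0 := by simpa using he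
    exact hne (eq_zero_of_zero_eq_one h10.symm _)
  have key : (holeSum (swapConf η x (x + 1)) : ℤ) - holeSum η = x.val - (x + 1).val := by
    simp only [holeSum, Nat.cast_sum, ← Finset.sum_sub_distrib]
    rw [Finset.sum_eq_add x (x + 1) hx1x.symm
      (fun y _ hy => by rw [swapConf_apply_of_ne _ hy.1 hy.2, sub_self]) (by simp) (by simp)]
    simp [swapConf_apply_right _ hx1x, hx, hx1, sub_eq_add_neg]
  have := val_sub_one_lt hne
  rw [add_sub_cancel_right] at this
  omega

theorem reflTransGen_starConf_of_isErgodic (hN : 3 ≤ N) (hK : N < 2 * K) {η : Conf N}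
    (hcnt : numParticles η = K) (hE : isErgodic η) :
    Relation.ReflTransGen Step η (starConf N K) := by
  induction hn : holeSum η using Nat.strong_induction_on generalizing η with
  | _ n ih =>
  subst hn
  by_cases hstar : η = starConf N K
  · exact hstar ▸ .refl
  obtain ⟨h, hh, hh0, hh2⟩ : ∃ h, η h = false ∧ h ≠ 0 ∧ η (h - 2) = true := by
    by_contra! hno
    exact hstar (eq_starConf hK hcnt fun h hh hh0 => by simpa using hno h hh hh0)
  have hh1 : η (h - 1) = true := (neighbours_eq_true_of_isErgodic hE hh).2
  have hj : IsJump η (h - 1) 1 := ⟨by rwa [sub_sub, one_add_one_eq_two], hh1, by simpa using hh⟩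
  have hstep := step_swapConf (Or.inl rfl) hj
  exact .head hstep (ih _ (holeSum_swapConf_lt hh1 (by simpa using hh) (by simpa using hh0))
    (by rw [hstep.numParticles_eq, hcnt]) (hstep.isErgodic hN hE) rfl)

theorem reflTransGen_starConf (hN : 3 ≤ N) (hK : N < 2 * K) {η : Conf N}
    (hcnt : numParticles η = K) : Relation.ReflTransGen Step η (starConf N K) := by
  obtain ⟨ξ, hreach, hξ⟩ := exists_reflTransGen_isErgodic hN (hcnt ▸ hK)
  exact hreach.trans (reflTransGen_starConf_of_isErgodic hN hK
    (by rw [numParticles_eq_of_reflTransGen hreach, hcnt]) hξ)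

end

section

variable {N K : ℕ} [NeZero N]

theorem genFEP_apply_of_ne {η η' : GammaT N K} (h : η ≠ η') :
    genFEP N K η η' = jumpCount η.1 η'.1 := by
  simp [genFEP, Ne.symm h]

theorem genFEP_mulVec_one : genFEP N K *ᵥ 1 = 0 := by
  ext η
  simp only [mulVec, dotProduct, Pi.one_apply, mul_one, Pi.zero_apply]
  rw [← Finset.add_sum_erase _ _ (Finset.mem_univ η)]
  simp only [genFEP, if_true]
  rw [neg_add_eq_zero]
  refine Finset.sum_congr (by ext; simp) fun η' hη' => ?_
  rw [if_neg (Finset.ne_of_mem_erase hη')]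

theorem genFEP_apply_nonneg_of_ne {η η' : GammaT N K} (h : η ≠ η') : 0 ≤ genFEP N K η η' := by
  rw [genFEP_apply_of_ne h]
  positivity

theorem genFEP_apply_pos {η η' : GammaT N K} (h : Step η.1 η'.1) : 0 < genFEP N K η η' := by
  rw [genFEP_apply_of_ne fun he => h.ne (congrArg Subtype.val he)]
  exact Nat.cast_pos.mpr (Nat.pos_of_ne_zero h)

theorem genFEP_eq_zero (hN : 3 ≤ N) {η η' : GammaT N K} (hE : isErgodic η.1)
    (hE' : ¬ isErgodic η'.1) : genFEP N K η η' = 0 := by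
  rw [genFEP_apply_of_ne (by rintro rfl; exact hE' hE), Nat.cast_eq_zero]
  by_contra h
  exact hE' (Step.isErgodic hN hE h)

theorem genFEP_comm (hN : 3 ≤ N) {η η' : GammaT N K} (hE : isErgodic η.1)
    (hE' : isErgodic η'.1) : genFEP N K η η' = genFEP N K η' η := by
  rcases eq_or_ne η η' with rfl | h
  · rfl
  · rw [genFEP_apply_of_ne h, genFEP_apply_of_ne h.symm, jumpCount_comm hN hE hE']

theorem reflTransGen_genFEP_pos {η ξ : GammaT N K} (h : Relation.ReflTransGen Step η.1 ξ.1) :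
    Relation.ReflTransGen (fun a b => 0 < genFEP N K a b) η ξ := by
  suffices ∀ c, Relation.ReflTransGen Step c ξ.1 → ∀ hc : numParticles c = K,
      Relation.ReflTransGen (fun a b => 0 < genFEP N K a b) ⟨c, hc⟩ ξ from this _ h η.2
  intro c hc
  induction hc using Relation.ReflTransGen.head_induction_on with
  | refl => exact fun _ => .refl
  | head hstep _ ih =>
    exact fun hc => .head (genFEP_apply_pos hstep) (ih (by rw [hstep.numParticles_eq, hc]))

theorem piFEP_nonneg (η : GammaT N K) : 0 ≤ piFEP N K η := by
  unfold piFEP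
  split_ifs <;> positivity

theorem sum_piFEP (hK : N < 2 * K) (hKN : K ≤ N) : ∑ η, piFEP N K η = 1 := by
  have hstar : (⟨starConf N K, numParticles_starConf hK hKN⟩ : GammaT N K) ∈ ergoFinset N K := by
    simpa [ergoFinset] using isErgodic_starConf hK
  have hcard : ((ergoFinset N K).card : ℝ) ≠ 0 := by
    exact_mod_cast (Finset.card_pos.mpr ⟨_, hstar⟩).ne'
  simp only [piFEP, Finset.sum_ite, Finset.sum_const_zero, add_zero, Finset.sum_const,
    nsmul_eq_mul]
  exact mul_one_div_cancel hcard

theorem piFEP_vecMul_genFEP (hN : 3 ≤ N) : piFEP N K ᵥ* genFEP N K = 0 := by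
  ext ξ
  simp only [vecMul, dotProduct, Pi.zero_apply]
  by_cases hξ : isErgodic ξ.1
  · have hrow : ∑ η, genFEP N K ξ η = 0 := by
      simpa [mulVec, dotProduct] using congrFun genFEP_mulVec_one ξ
    rw [← mul_zero (1 / ((ergoFinset N K).card : ℝ)), ← hrow, Finset.mul_sum]
    refine Finset.sum_congr rfl fun η _ => ?_
    by_cases hη : isErgodic η.1
    · rw [piFEP, if_pos hη, genFEP_comm hN hη hξ]
    · rw [piFEP, if_neg hη, genFEP_eq_zero hN hξ hη, zero_mul, mul_zero]
  · refine Finset.sum_eq_zero fun η _ => ?_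
    by_cases hη : isErgodic η.1
    · rw [genFEP_eq_zero hN hη hξ, mul_zero]
    · rw [piFEP, if_neg hη, zero_mul]

theorem exp_smul_genFEP_mem_rowStochastic {t : ℝ} (ht : 0 ≤ t) :
    exp (t • genFEP N K) ∈ rowStochastic ℝ (GammaT N K) :=
  exp_mem_rowStochastic (fun _ _ h => mul_nonneg ht (genFEP_apply_nonneg_of_ne h))
    (by rw [smul_mulVec, genFEP_mulVec_one, smul_zero])

theorem piFEP_vecMul_exp_smul_genFEP (hN : 3 ≤ N) (t : ℝ) :
    piFEP N K ᵥ* exp (t • genFEP N K) = piFEP N K :=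
  vecMul_exp_of_vecMul_eq_zero (by rw [vecMul_smul, piFEP_vecMul_genFEP hN, smul_zero])

theorem Pt_add (s t : ℝ) (η : GammaT N K) :
    Pt N K (s + t) η = Pt N K s η ᵥ* exp (t • genFEP N K) := by
  ext ξ
  simp only [Pt, add_smul, Matrix.exp_add_of_commute _ _ ((Commute.refl _).smul_left s
    |>.smul_right t), mul_apply, vecMul, dotProduct]

theorem dTV_single_piFEP_le_one (hK : N < 2 * K) (hKN : K ≤ N) (η : GammaT N K) :
    dTV (Pi.single η 1) (piFEP N K) ≤ 1 :=
  dTV_le_one (fun ξ => by rw [Pi.single_apply]; split_ifs <;> norm_num) piFEP_nonneg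
    (by simp) (sum_piFEP hK hKN)

theorem exists_pos_le_exp_genFEP_starConf (hN : 3 ≤ N) (hK : N < 2 * K) (hKN : K ≤ N) :
    ∃ δ > 0, ∀ η, δ ≤ exp (genFEP N K) η ⟨starConf N K, numParticles_starConf hK hKN⟩ := by
  set ξ₀ : GammaT N K := ⟨starConf N K, numParticles_starConf hK hKN⟩
  have hpos : ∀ η, 0 < exp (genFEP N K) η ξ₀ := fun η =>
    exp_apply_pos (fun _ _ => genFEP_apply_nonneg_of_ne)
      (reflTransGen_genFEP_pos (reflTransGen_starConf hN hK η.2))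
  have : Nonempty (GammaT N K) := ⟨ξ₀⟩
  obtain ⟨η₀, hη₀⟩ := Finite.exists_min fun η => exp (genFEP N K) η ξ₀
  exact ⟨_, hpos η₀, hη₀⟩

theorem exists_dTV_Pt_le (hN : 3 ≤ N) (hK : N < 2 * K) (hKN : K ≤ N) {ε : ℝ} (hε : 0 < ε) :
    ∃ t, 0 ≤ t ∧ ∀ η : GammaT N K, dTV (Pt N K t η) (piFEP N K) ≤ ε := by
  set P := exp (genFEP N K)
  have hP : P ∈ rowStochastic ℝ (GammaT N K) := by
    simpa using exp_smul_genFEP_mem_rowStochastic (N := N) (K := K) zero_le_one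
  obtain ⟨δ, hδ, hδP⟩ := exists_pos_le_exp_genFEP_starConf hN hK hKN
  set ξ₀ : GammaT N K := ⟨starConf N K, numParticles_starConf hK hKN⟩
  have hmin : ∀ i j, δ * (Pi.single ξ₀ 1 : GammaT N K → ℝ) j ≤ P i j := by
    intro i j
    rcases eq_or_ne j ξ₀ with rfl | h
    · simpa using hδP i
    · simpa [h] using hP.1 i j
  have hδ1 : δ ≤ 1 := (hδP ξ₀).trans (le_one_of_mem_rowStochastic hP)
  obtain ⟨n, hn⟩ := exists_pow_lt_of_lt_one hε (by linarith : 1 - δ < 1)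
  refine ⟨n, n.cast_nonneg, fun η => ?_⟩
  have hPt : Pt N K n η = Pi.single η 1 ᵥ* P ^ n := by
    rw [single_one_vecMul, ← Matrix.exp_nsmul, ← Nat.cast_smul_eq_nsmul ℝ]
    rfl
  calc dTV (Pt N K n η) (piFEP N K)
      ≤ (1 - δ) ^ n * dTV (Pi.single η 1) (piFEP N K) := hPt ▸
        dTV_vecMul_pow_le hδ1 hP hmin (by simp) (by simp [sum_piFEP hK hKN])
          (by simpa using piFEP_vecMul_exp_smul_genFEP (K := K) hN 1) n
    _ ≤ (1 - δ) ^ n :=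
        mul_le_of_le_one_right (pow_nonneg (by linarith) n) (dTV_single_piFEP_le_one hK hKN η)
    _ ≤ ε := hn.le

theorem sum_transient_Pt_le_dTV (hK : N < 2 * K) (hKN : K ≤ N) {t : ℝ} (ht : 0 ≤ t)
    (η : GammaT N K) :
    ∑ η' ∈ Finset.univ.filter (fun η' : GammaT N K => ¬ isErgodic η'.1), Pt N K t η η' ≤
      dTV (Pt N K t η) (piFEP N K) := calc
  _ = ∑ η' ∈ Finset.univ.filter (fun η' : GammaT N K => ¬ isErgodic η'.1),
        (Pt N K t η η' - piFEP N K η') :=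
      Finset.sum_congr rfl fun η' hη' => by simp [piFEP, (Finset.mem_filter.mp hη').2]
  _ ≤ _ := sum_sub_le_dTV ((sum_row_of_mem_rowStochastic
      (exp_smul_genFEP_mem_rowStochastic ht) η).trans (sum_piFEP hK hKN).symm) _

theorem dTV_Pt_add_le (hK : N < 2 * K) (hKN : K ≤ N) {s t a b : ℝ} (hs : 0 ≤ s) (ht : 0 ≤ t)
    (hb : 0 ≤ b) {η : GammaT N K}
    (hT : ∑ η' ∈ Finset.univ.filter (fun η' : GammaT N K => ¬ isErgodic η'.1),
      Pt N K s η η' ≤ a)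
    (hE : ∀ μ : GammaT N K, isErgodic μ.1 → dTV (Pt N K t μ) (piFEP N K) ≤ b) :
    dTV (Pt N K (s + t) η) (piFEP N K) ≤ a + b := by
  have hs' := exp_smul_genFEP_mem_rowStochastic (N := N) (K := K) hs
  have ht' := exp_smul_genFEP_mem_rowStochastic (N := N) (K := K) ht
  rw [Pt_add]
  refine dTV_vecMul_le_add (fun _ => hs'.1 _ _) (sum_row_of_mem_rowStochastic hs' η) _ _ hb hT
    (fun μ _ => dTV_le_one (ht'.1 μ) piFEP_nonneg (sum_row_of_mem_rowStochastic ht' μ)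
      (sum_piFEP hK hKN))
    fun μ hμ => hE μ (by simpa using hμ)

end

end FEP

theorem fep_mixing_sandwich_general
    (ε : ℝ) (hε : ε ∈ Set.Ioo (0 : ℝ) 1) (N K : ℕ)
    (h1 : N < 2 * K) (h2 : K < N) :
    max (transienceTime N K ε) (ergoMixingTime N K ε) ≤ mixingTime N K ε ∧
      mixingTime N K ε ≤ transienceTime N K (ε / 2) + ergoMixingTime N K (ε / 2) := by
  have hN : 3 ≤ N := by omega
  have : NeZero N := ⟨by omega⟩
  have hbdd : ∀ {p : ℝ → Prop}, BddBelow {t : ℝ | 0 ≤ t ∧ p t} := ⟨0, fun _ ht => ht.1⟩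
  have hmix : ∀ {δ}, 0 < δ → ∃ t, 0 ≤ t ∧ ∀ η : GammaT N K, dTV (Pt N K t η) (piFEP N K) ≤ δ :=
    FEP.exists_dTV_Pt_le hN h1 h2.le
  have htrans : ∀ {t}, 0 ≤ t → ∀ η : GammaT N K, _ ≤ dTV (Pt N K t η) (piFEP N K) :=
    FEP.sum_transient_Pt_le_dTV h1 h2.le
  obtain ⟨t₀, ht₀, hmix₀⟩ := hmix (half_pos hε.1)
  simp only [mixingTime, ergoMixingTime, transienceTime, dif_neg (NeZero.ne N)]
  refine ⟨max_le ?_ ?_, ?_⟩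
  · exact csInf_le_csInf hbdd (hmix hε.1) fun t ⟨ht, h⟩ => ⟨ht, fun η => (htrans ht η).trans (h η)⟩
  · exact csInf_le_csInf hbdd (hmix hε.1) fun t ⟨ht, h⟩ => ⟨ht, fun η _ => h η⟩
  · refine csInf_le_csInf_add_csInf hbdd ⟨t₀, ht₀, fun η => (htrans ht₀ η).trans (hmix₀ η)⟩
      ⟨t₀, ht₀, fun η _ => hmix₀ η⟩ ?_
    rintro s ⟨hs, hT⟩ t ⟨ht, hE⟩
    exact ⟨add_nonneg hs ht, fun η => by
      simpa using FEP.dTV_Pt_add_le h1 h2.le hs ht (half_pos hε.1).le (hT η) hE⟩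

/-- **Decomposition of the mixing time.**  For every `ε ∈ (0,1)`, every `N ≥ 2` and every
integer `K` with `N/2 < K < N`:
`max(θ_{N,K}(ε), τ^ℰ_{N,K}(ε)) ≤ τ_{N,K}(ε) ≤ θ_{N,K}(ε/2) + τ^ℰ_{N,K}(ε/2)`. -/
theorem fep_mixing_sandwich
    (ε : ℝ) (hε : ε ∈ Set.Ioo (0 : ℝ) 1) (N K : ℕ) (hN : 2 ≤ N)
    (h1 : N < 2 * K) (h2 : K < N) :
    max (transienceTime N K ε) (ergoMixingTime N K ε) ≤ mixingTime N K ε ∧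
      mixingTime N K ε ≤ transienceTime N K (ε / 2) + ergoMixingTime N K (ε / 2) :=
  fep_mixing_sandwich_general ε hε N K h1 h2
end

section
/- Let N ≥ 2 and N/2 < K < N be integers. For every η ∈ ℰ_{N,K} and every k ∈ ℤ/Kℤ, the configuration σ^{(k,η)} : ℤ/Kℤ → {0,1} given by σ^{(k,η)}_l = 2 − d(x_{k+l−1}(η), x_{k+l}(η)) is well defined (each value lies in {0,1}) and has exactly 2K − N occupied sites, i.e. σ^{(k,η)} ∈ Γ_{K,2K−N}. -/
open scoped Classical BigOperators

noncomputable section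

/-- The representative of `k ∈ ℤ/Kℤ` in `{1, …, K}`. -/
def repOne {K : ℕ} [NeZero K] (k : ZMod K) : ℕ :=
  if k.val = 0 then K else k.val

/-- `Σ_{y=1}^{x} η_y`, the number of particles among sites `1, …, x`. -/
def countUpTo {N : ℕ} (η : Conf N) (x : ℕ) : ℕ :=
  ∑ y ∈ Finset.Icc 1 x, (if η ((y : ℕ) : ZMod N) = true then 1 else 0)

/-- `x_k(η) ∈ {1, …, N}`: the position of the `k`-th particle of `η`. -/
def pos {N K : ℕ} [NeZero K] (η : Conf N) (k : ZMod K) : ℕ :=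
  sInf {x : ℕ | 1 ≤ x ∧ x ≤ N ∧ countUpTo η x = repOne k}

/-- The clockwise distance `d(a,b) ∈ {1, …, M}` from `a` to `b` on `ℤ/Mℤ`. -/
def cdist {M : ℕ} [NeZero M] (a b : ZMod M) : ℕ :=
  if (b - a).val = 0 then M else (b - a).val

/-- The (integer) value `σ^{(k,η)}_l = 2 − d(x_{k+l−1}(η), x_{k+l}(η))`. -/
def sigmaVal {N K : ℕ} [NeZero N] [NeZero K] (η : Conf N) (k l : ZMod K) : ℤ :=
  2 - (cdist ((pos η (k + l - 1) : ℕ) : ZMod N) ((pos η (k + l) : ℕ) : ZMod N) : ℤ)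

/-- The SSEP configuration `σ^{(k,η)}`, occupied at `l` iff `σ^{(k,η)}_l = 1`. -/
def sigmaConf {N K : ℕ} [NeZero N] [NeZero K] (η : Conf N) (k : ZMod K) : Conf K :=
  fun l => decide (cdist ((pos η (k + l - 1) : ℕ) : ZMod N) ((pos η (k + l) : ℕ) : ZMod N) = 1)

/-!
Number the particles of `η` as `x₁ < ⋯ < x_K` in `{1, …, N}`. No site strictly between two
cyclically consecutive particles is occupied, so ergodicity (no two adjacent empty sites) forces
every gap `d(x_{m-1}, x_m)` to be `1` or `2`. The gaps of a closed cycle in `ℤ/Nℤ` sum to a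
multiple of `N`; as the sum lies between `K` and `2K < 2N`, it equals `N`. If `a` gaps equal `1`
and `b` equal `2`, then `a + b = K` and `a + 2b = N`, so `a = 2K - N`, and `σ^{(k,η)}` merely
lists the gaps starting from particle `k`.
-/

theorem exists_le_apply_eq_of_succ_le {f : ℕ → ℕ} (hf : ∀ x, f (x + 1) ≤ f x + 1) {n j : ℕ}
    (h0 : f 0 ≤ j) (hj : j ≤ f n) : ∃ x ≤ n, f x = j := by
  induction n with
  | zero => exact ⟨0, le_rfl, le_antisymm h0 hj⟩
  | succ n ih =>
    by_cases hjn : j ≤ f n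
    · obtain ⟨x, hxn, hx⟩ := ih hjn
      exact ⟨x, by omega, hx⟩
    · exact ⟨n + 1, le_rfl, by have := hf n; omega⟩

theorem card_filter_eq_one_add_sum {ι : Type*} (s : Finset ι) {f : ι → ℕ}
    (hf : ∀ i ∈ s, f i = 1 ∨ f i = 2) : (s.filter (f · = 1)).card + ∑ i ∈ s, f i = 2 * s.card := by
  rw [Finset.card_filter, ← Finset.sum_add_distrib, Finset.card_eq_sum_ones, Finset.mul_sum]
  refine Finset.sum_congr rfl fun i hi => ?_
  rcases hf i hi with h | h <;> simp [h]

section Cdist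

variable {M : ℕ} [NeZero M]

theorem one_le_cdist (a b : ZMod M) : 1 ≤ cdist a b := by
  have := NeZero.pos M
  unfold cdist
  split <;> omega

theorem natCast_cdist (a b : ZMod M) : (cdist a b : ZMod M) = b - a := by
  unfold cdist
  split
  · next h => rw [ZMod.natCast_self, eq_comm, ← ZMod.val_eq_zero, h]
  · exact ZMod.natCast_zmod_val _

theorem cdist_natCast_of_lt {a b : ℕ} (ha : 1 ≤ a) (hab : a < b) (hb : b ≤ M) :
    cdist (a : ZMod M) b = b - a := by
  have hlt : b - a < M := by omega
  have hne : b - a ≠ 0 := by omega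
  rw [cdist, ← Nat.cast_sub hab.le, ZMod.val_natCast, Nat.mod_eq_of_lt hlt, if_neg hne]

theorem cdist_natCast_of_le {a b : ℕ} (hb : 1 ≤ b) (hba : b ≤ a) (ha : a ≤ M) :
    cdist (a : ZMod M) b = M - a + b := by
  have hcast : (b : ZMod M) - a = ((M - a + b : ℕ) : ZMod M) := by
    rw [sub_eq_iff_eq_add, ← Nat.cast_add, show M - a + b + a = b + M by omega, Nat.cast_add,
      ZMod.natCast_self, add_zero]
  rcases hba.lt_or_eq with hlt | rfl
  · have hlt : M - a + b < M := by omega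
    have hne : M - a + b ≠ 0 := by omega
    rw [cdist, hcast, ZMod.val_natCast, Nat.mod_eq_of_lt hlt, if_neg hne]
  · rw [cdist, sub_self, ZMod.val_zero, if_pos rfl]
    omega

theorem dvd_sum_cdist {G : Type*} [AddCommGroup G] [Fintype G] (f : G → ZMod M) (t : G) :
    M ∣ ∑ g, cdist (f (g - t)) (f g) := by
  rw [← ZMod.natCast_eq_zero_iff, Nat.cast_sum]
  simp only [natCast_cdist]
  rw [Finset.sum_sub_distrib, ← Equiv.sum_comp (Equiv.subRight t) (fun g => f g)]
  exact sub_self _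

end Cdist

section RepOne

variable {K : ℕ} [NeZero K]

theorem repOne_mem_Icc (m : ZMod K) : repOne m ∈ Finset.Icc 1 K := by
  have := ZMod.val_lt m
  rw [Finset.mem_Icc, repOne]
  split <;> omega

theorem natCast_repOne (m : ZMod K) : (repOne m : ZMod K) = m := by
  unfold repOne
  split
  · next h => rw [ZMod.natCast_self, eq_comm, ← ZMod.val_eq_zero, h]
  · exact ZMod.natCast_zmod_val m

theorem repOne_natCast {j : ℕ} (hj : 1 ≤ j) (hjK : j ≤ K) : repOne (j : ZMod K) = j := by
  rw [repOne, ZMod.val_natCast]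
  rcases hjK.lt_or_eq with hlt | rfl
  · rw [Nat.mod_eq_of_lt hlt, if_neg (by omega)]
  · simp

theorem repOne_zero : repOne (0 : ZMod K) = K := by simp [repOne]

end RepOne

section CountUpTo

variable {N : ℕ} (η : Conf N)

theorem countUpTo_zero : countUpTo η 0 = 0 := by simp [countUpTo]

theorem countUpTo_succ (x : ℕ) :
    countUpTo η (x + 1) = countUpTo η x + if η ((x + 1 : ℕ) : ZMod N) = true then 1 else 0 := by
  rw [countUpTo, Finset.sum_Icc_succ_top (by omega), countUpTo]

theorem countUpTo_succ_le (x : ℕ) : countUpTo η (x + 1) ≤ countUpTo η x + 1 := by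
  rw [countUpTo_succ]; split <;> omega

theorem countUpTo_mono : Monotone (countUpTo η) :=
  monotone_nat_of_le_succ fun x => by rw [countUpTo_succ]; exact Nat.le_add_right _ _

theorem countUpTo_eq_numParticles [NeZero N] : countUpTo η N = numParticles η := by
  rw [countUpTo, numParticles, Finset.card_filter]
  refine Finset.sum_nbij' (fun y => (y : ZMod N)) repOne (fun _ _ => Finset.mem_univ _)
    (fun z _ => repOne_mem_Icc z) (fun y hy => ?_) (fun z _ => natCast_repOne z) (fun _ _ => rfl)
  rw [Finset.mem_Icc] at hy
  exact repOne_natCast hy.1 hy.2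

end CountUpTo

def particlePos {N : ℕ} (η : Conf N) (j : ℕ) : ℕ :=
  sInf {x : ℕ | 1 ≤ x ∧ x ≤ N ∧ countUpTo η x = j}

theorem pos_natCast {N K : ℕ} [NeZero K] (η : Conf N) {j : ℕ} (hj : 1 ≤ j) (hjK : j ≤ K) :
    pos η (j : ZMod K) = particlePos η j := by
  rw [pos, repOne_natCast hj hjK, particlePos]

theorem pos_zero {N K : ℕ} [NeZero K] (η : Conf N) : pos η (0 : ZMod K) = particlePos η K := by
  rw [pos, repOne_zero, particlePos]

theorem isErgodic.le_add_two_of_forall_eq_false {N : ℕ} {η : Conf N} (herg : isErgodic η)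
    {a b : ℕ} (h : ∀ y, a < y → y < b → η (y : ZMod N) = false) : b ≤ a + 2 := by
  by_contra! hab
  have hsucc : ((a + 1 : ℕ) : ZMod N) + 1 = ((a + 2 : ℕ) : ZMod N) := by push_cast; ring
  have := herg ((a + 1 : ℕ) : ZMod N)
  rw [hsucc, h (a + 1) (by omega) (by omega), h (a + 2) (by omega) (by omega)] at this
  simp at this

section ParticlePos

variable {N K : ℕ} {η : Conf N}

theorem particlePos_spec (hK : countUpTo η N = K) {j : ℕ} (hj : 1 ≤ j) (hjK : j ≤ K) :
    1 ≤ particlePos η j ∧ particlePos η j ≤ N ∧ countUpTo η (particlePos η j) = j := by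
  obtain ⟨x, hxN, hx⟩ := exists_le_apply_eq_of_succ_le (countUpTo_succ_le η)
    (by rw [countUpTo_zero]; omega) (by omega : j ≤ countUpTo η N)
  have hx1 : 1 ≤ x := Nat.one_le_iff_ne_zero.mpr fun h => by
    rw [h, countUpTo_zero] at hx; omega
  exact Nat.sInf_mem (s := {x | 1 ≤ x ∧ x ≤ N ∧ countUpTo η x = j}) ⟨x, hx1, hxN, hx⟩

theorem particlePos_strictMonoOn (hK : countUpTo η N = K) :
    StrictMonoOn (particlePos η) (Set.Icc 1 K) := by
  intro i hi j hj hij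
  have hci := (particlePos_spec hK hi.1 hi.2).2.2
  have hcj := (particlePos_spec hK hj.1 hj.2).2.2
  exact (countUpTo_mono η).reflect_lt (by omega)

theorem exists_particlePos_eq_of_occupied (hK : countUpTo η N = K) {x : ℕ} (hx1 : 1 ≤ x)
    (hxN : x ≤ N) (hx : η (x : ZMod N) = true) : ∃ i ∈ Set.Icc 1 K, particlePos η i = x := by
  obtain ⟨y, rfl⟩ := Nat.exists_eq_add_of_le' hx1
  have hcount : countUpTo η (y + 1) = countUpTo η y + 1 := by
    rw [countUpTo_succ, if_pos hx]
  have hcK : countUpTo η (y + 1) ≤ K := hK ▸ countUpTo_mono η hxN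
  refine ⟨countUpTo η (y + 1), ⟨by omega, hcK⟩, le_antisymm (Nat.sInf_le ⟨hx1, hxN, rfl⟩) ?_⟩
  obtain ⟨_, _, hp⟩ := particlePos_spec hK (by omega) hcK
  by_contra! hlt
  have := countUpTo_mono η (Nat.le_of_lt_succ hlt)
  omega

theorem occupied_eq_false_of_between (hK : countUpTo η N = K) {j y : ℕ} (hj : 1 ≤ j)
    (hjK : j + 1 ≤ K) (hy : particlePos η j < y) (hy' : y < particlePos η (j + 1)) :
    η (y : ZMod N) = false := by
  have hN := (particlePos_spec hK (by omega) hjK).2.1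
  by_contra! hocc
  obtain ⟨i, hi, rfl⟩ :=
    exists_particlePos_eq_of_occupied hK (x := y) (by omega) (by omega) (by simpa using hocc)
  have hmono := particlePos_strictMonoOn hK
  have h₁ := (hmono.lt_iff_lt ⟨hj, by omega⟩ hi).mp hy
  have h₂ := (hmono.lt_iff_lt hi ⟨by omega, hjK⟩).mp hy'
  omega

theorem occupied_eq_false_of_last_lt (hK : countUpTo η N = K) (hK1 : 1 ≤ K) {y : ℕ}
    (hy : particlePos η K < y) (hy' : y < particlePos η 1 + N) : η (y : ZMod N) = false := by
  have hmono := particlePos_strictMonoOn hK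
  have h1N := (particlePos_spec hK le_rfl hK1).2.1
  by_contra! hocc
  rcases le_or_gt y N with hyN | hNy
  · obtain ⟨i, hi, rfl⟩ :=
      exists_particlePos_eq_of_occupied hK (x := y) (by omega) hyN (by simpa using hocc)
    have := (hmono.lt_iff_lt ⟨hK1, le_rfl⟩ hi).mp hy
    exact absurd hi.2 (by omega)
  · have hcast : (y : ZMod N) = ((y - N : ℕ) : ZMod N) := by
      rw [Nat.cast_sub hNy.le, ZMod.natCast_self, sub_zero]
    rw [hcast] at hocc
    obtain ⟨i, hi, hiy⟩ :=
      exists_particlePos_eq_of_occupied hK (x := y - N) (by omega) (by omega) (by simpa using hocc)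
    have := (hmono.lt_iff_lt hi ⟨le_rfl, hK1⟩).mp (by omega)
    exact absurd hi.1 (by omega)

theorem particlePos_succ_le_add_two (hK : countUpTo η N = K) (herg : isErgodic η) {j : ℕ}
    (hj : 1 ≤ j) (hjK : j + 1 ≤ K) :
    particlePos η (j + 1) ≤ particlePos η j + 2 :=
  herg.le_add_two_of_forall_eq_false fun _ hy hy' => occupied_eq_false_of_between hK hj hjK hy hy'

theorem particlePos_one_add_le (hK : countUpTo η N = K) (herg : isErgodic η) (hK1 : 1 ≤ K) :
    particlePos η 1 + N ≤ particlePos η K + 2 :=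
  herg.le_add_two_of_forall_eq_false fun _ hy hy' => occupied_eq_false_of_last_lt hK hK1 hy hy'

end ParticlePos

def particleGap {N K : ℕ} [NeZero N] [NeZero K] (η : Conf N) (m : ZMod K) : ℕ :=
  cdist ((pos η (m - 1) : ℕ) : ZMod N) ((pos η m : ℕ) : ZMod N)

section ParticleGap

variable {N K : ℕ} [NeZero N] [NeZero K] {η : Conf N}

theorem particleGap_le_two (hK : countUpTo η N = K) (herg : isErgodic η) (m : ZMod K) :
    particleGap η m ≤ 2 := by
  have hK1 : 1 ≤ K := NeZero.one_le
  obtain ⟨j, hj, rfl⟩ : ∃ j ∈ Finset.Icc 1 K, (j : ZMod K) = m :=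
    ⟨repOne m, repOne_mem_Icc m, natCast_repOne m⟩
  rw [Finset.mem_Icc] at hj
  obtain ⟨i, rfl⟩ := Nat.exists_eq_add_of_le' hj.1
  have hmono := particlePos_strictMonoOn hK
  rcases Nat.eq_zero_or_pos i with rfl | hi
  · have h1 := particlePos_spec hK le_rfl hK1
    have hKN := (particlePos_spec hK hK1 le_rfl).2.1
    have hle := hmono.monotoneOn ⟨le_rfl, hK1⟩ ⟨hK1, le_rfl⟩ hK1
    have := particlePos_one_add_le hK herg hK1
    have hm : ((0 + 1 : ℕ) : ZMod K) - 1 = 0 := by simp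
    rw [particleGap, hm, pos_zero, pos_natCast η hj.1 hj.2, zero_add,
      cdist_natCast_of_le h1.1 hle hKN]
    omega
  · have hcast : ((i + 1 : ℕ) : ZMod K) - 1 = (i : ZMod K) := by push_cast; ring
    have hi1 := (particlePos_spec hK hi (by omega)).1
    have hiN := (particlePos_spec hK hj.1 hj.2).2.1
    have hlt := hmono ⟨hi, by omega⟩ ⟨hj.1, hj.2⟩ (Nat.lt_succ_self i)
    rw [particleGap, hcast, pos_natCast η hi (by omega), pos_natCast η hj.1 hj.2,
      cdist_natCast_of_lt hi1 hlt hiN]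
    have := particlePos_succ_le_add_two hK herg hi hj.2
    omega

theorem particleGap_eq_one_or_two (hK : countUpTo η N = K) (herg : isErgodic η) (m : ZMod K) :
    particleGap η m = 1 ∨ particleGap η m = 2 := by
  have := one_le_cdist ((pos η (m - 1) : ℕ) : ZMod N) ((pos η m : ℕ) : ZMod N)
  have := particleGap_le_two hK herg m
  rw [particleGap] at *
  omega

theorem sum_particleGap (hK : countUpTo η N = K) (herg : isErgodic η) (hKN : K < N) :
    ∑ m : ZMod K, particleGap η m = N := by
  have hcount :=
    card_filter_eq_one_add_sum Finset.univ fun m _ => particleGap_eq_one_or_two hK herg m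
  have hle := Finset.card_filter_le Finset.univ fun m : ZMod K => particleGap η m = 1
  rw [Finset.card_univ, ZMod.card] at hcount hle
  obtain ⟨c, hc⟩ := dvd_sum_cdist (fun m : ZMod K => ((pos η m : ℕ) : ZMod N)) 1
  change ∑ m, particleGap η m = N * c at hc
  have hK1 : 1 ≤ K := NeZero.one_le
  rw [hc] at hcount ⊢
  rcases c with _ | _ | c
  · omega
  · exact mul_one N
  · nlinarith

theorem numParticles_sigmaConf (k : ZMod K) :
    numParticles (sigmaConf η k) =
      (Finset.univ.filter fun m : ZMod K => particleGap η m = 1).card := by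
  rw [numParticles]
  refine Finset.card_nbij' (k + ·) (· - k) ?_ ?_ ?_ ?_ <;> intro m <;>
    simp only [Finset.mem_coe, Finset.mem_filter, Finset.mem_univ, true_and] <;>
    simp [sigmaConf, particleGap]

end ParticleGap

theorem fep_static_mapping_well_defined_general
    (N K : ℕ) [NeZero N] [NeZero K] (h2 : K < N)
    (η : Conf N) (hη : numParticles η = K ∧ isErgodic η) (k : ZMod K) :
    (∀ l : ZMod K, sigmaVal η k l = 0 ∨ sigmaVal η k l = 1) ∧
      numParticles (sigmaConf η k) = 2 * K - N := by
  obtain ⟨hcard, herg⟩ := hη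
  have hK : countUpTo η N = K := (countUpTo_eq_numParticles η).trans hcard
  have hgap := particleGap_eq_one_or_two hK herg
  refine ⟨fun l => ?_, ?_⟩
  · change 2 - (particleGap η (k + l) : ℤ) = 0 ∨ 2 - (particleGap η (k + l) : ℤ) = 1
    rcases hgap (k + l) with h | h <;> simp [h]
  · have hcount := card_filter_eq_one_add_sum Finset.univ fun m _ => hgap m
    rw [Finset.card_univ, ZMod.card, sum_particleGap hK herg h2] at hcount
    rw [numParticles_sigmaConf]
    omega

/-- **Static mapping, well-definedness.**  For `N ≥ 2`, `N/2 < K < N`, every ergodic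
configuration `η ∈ ℰ_{N,K}` and every `k ∈ ℤ/Kℤ`, the values
`σ^{(k,η)}_l = 2 − d(x_{k+l−1}(η), x_{k+l}(η))` all lie in `{0,1}`, and the resulting
configuration `σ^{(k,η)}` has exactly `2K − N` occupied sites, i.e. `σ^{(k,η)} ∈ Γ_{K,2K−N}`. -/
theorem fep_static_mapping_well_defined
    (N K : ℕ) [NeZero N] [NeZero K] (hN : 2 ≤ N) (h1 : N < 2 * K) (h2 : K < N)
    (η : Conf N) (hη : numParticles η = K ∧ isErgodic η) (k : ZMod K) :
    (∀ l : ZMod K, sigmaVal η k l = 0 ∨ sigmaVal η k l = 1) ∧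
      numParticles (sigmaConf η k) = 2 * K - N :=
  fep_static_mapping_well_defined_general N K h2 η hη k

end
end

section
/- Let N ≥ 2 and N/2 < K < N be integers, let σ ∈ Γ_{K,2K−N} (with sites indexed by representatives 1,…,K) and x ∈ ℤ/Nℤ. Then the K elements x + Σ_{j=1}^{l} (2 − σ_j) of ℤ/Nℤ, for l = 0, 1, …, K−1 (empty sum equal to 0), are pairwise distinct; moreover the configuration η : ℤ/Nℤ → {0,1} whose set of occupied sites is exactly this K-element set belongs to ℰ_{N,K}. -/
open scoped Classical BigOperators

noncomputable section

/-- The partial sums `x + Σ_{j=1}^{l} (2 − σ_j)`, viewed in `ℤ/Nℤ`. -/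
def partialPos {N K : ℕ} (σ : Conf K) (x : ZMod N) (l : ℕ) : ZMod N :=
  x + ((∑ j ∈ Finset.Icc 1 l, (if σ ((j : ℕ) : ZMod K) = true then 1 else 2) : ℕ) : ZMod N)

def Ssum {K : ℕ} (σ : Conf K) (l : ℕ) : ℕ :=
  ∑ j ∈ Finset.Icc 1 l, (if σ ((j : ℕ) : ZMod K) = true then 1 else 2)

lemma Ssum_zero {K : ℕ} (σ : Conf K) : Ssum σ 0 = 0 := by simp [Ssum]

lemma Ssum_succ {K : ℕ} (σ : Conf K) (l : ℕ) :
    Ssum σ (l + 1) = Ssum σ l + (if σ ((l + 1 : ℕ) : ZMod K) = true then 1 else 2) := by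
  unfold Ssum
  rw [Finset.sum_Icc_succ_top (by omega)]

lemma Ssum_strictMono {K : ℕ} (σ : Conf K) : StrictMono (Ssum σ) := by
  apply strictMono_nat_of_lt_succ
  intro n
  rw [Ssum_succ]
  split <;> omega

lemma Ssum_K {K : ℕ} [NeZero K] (σ : Conf K) :
    Ssum σ K + numParticles σ = 2 * K := by
  have h0 : numParticles σ = ∑ z : ZMod K, (if σ z = true then 1 else 0) := by
    rw [numParticles, Finset.card_filter]
  have h1 : ∑ z : ZMod K, (if σ z = true then 1 else 0)
      = ∑ j ∈ Finset.Icc 1 K, (if σ ((j : ℕ) : ZMod K) = true then 1 else 0) := by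
    refine Finset.sum_nbij' (i := fun z => if z = 0 then K else z.val)
      (j := fun j => ((j : ℕ) : ZMod K)) ?_ ?_ ?_ ?_ ?_
    · intro z _
      by_cases hz : z = 0
      · simp [hz, Finset.mem_Icc, Nat.one_le_iff_ne_zero, NeZero.ne K]
      · simp only [if_neg hz, Finset.mem_Icc]
        have h1 : z.val ≠ 0 := fun h => hz ((ZMod.val_eq_zero z).mp h)
        have h2 : z.val < K := ZMod.val_lt z
        omega
    · intro j _; exact Finset.mem_univ _
    · intro z _
      by_cases hz : z = 0
      · simp [hz, ZMod.natCast_self]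
      · simp [if_neg hz, ZMod.natCast_val, ZMod.cast_id]
    · intro j hj
      simp only [Finset.mem_Icc] at hj
      by_cases hK : (j : ZMod K) = 0
      · simp only [if_pos hK]
        have : (K : ℕ) ∣ j := (ZMod.natCast_eq_zero_iff j K).mp hK
        have : j = K := by
          rcases this with ⟨c, hc⟩
          have hK0 : 0 < K := Nat.pos_of_ne_zero (NeZero.ne K)
          rcases c with _ | c
          · omega
          · nlinarith
        omega
      · simp only [if_neg hK]
        have hjK : j < K := by
          rcases Nat.lt_or_ge j K with h | h
          · exact h
          · exfalso
            have : j = K := by omega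
            exact hK (by rw [this]; exact ZMod.natCast_self K)
        rw [ZMod.val_cast_of_lt hjK]
    · intro z _
      by_cases hz : z = 0
      · simp [hz, ZMod.natCast_self]
      · simp [if_neg hz, ZMod.natCast_val, ZMod.cast_id]
  have h2 : Ssum σ K + ∑ j ∈ Finset.Icc 1 K, (if σ ((j : ℕ) : ZMod K) = true then 1 else 0)
      = 2 * K := by
    rw [Ssum, ← Finset.sum_add_distrib]
    have hterm : ∀ j ∈ Finset.Icc 1 K,
        ((if σ ((j : ℕ) : ZMod K) = true then 1 else 2)
          + (if σ ((j : ℕ) : ZMod K) = true then 1 else 0)) = 2 := by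
      intro j _; split <;> rfl
    rw [Finset.sum_congr rfl hterm, Finset.sum_const, Nat.card_Icc, smul_eq_mul]
    omega
  omega

lemma Ssum_near {K : ℕ} (σ : Conf K) (m : ℕ) (hm : m ≤ Ssum σ K) :
    ∃ l ≤ K, Ssum σ l = m ∨ Ssum σ l = m + 1 := by
  induction m with
  | zero => exact ⟨0, Nat.zero_le _, Or.inl (Ssum_zero σ)⟩
  | succ m ih =>
    obtain ⟨l, hl, hcase⟩ := ih (le_of_lt hm)
    rcases hcase with h | h
    · have hlK : l < K := by
        rcases Nat.lt_or_ge l K with h' | h'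
        · exact h'
        · exfalso
          have : l = K := le_antisymm hl h'
          subst this; omega
      refine ⟨l + 1, hlK, ?_⟩
      have h2 := Ssum_succ σ l
      by_cases hb : σ ((l + 1 : ℕ) : ZMod K) = true
      · left; rw [h2, if_pos hb, h]
      · right; rw [h2, if_neg hb, h]
    · exact ⟨l, hl, Or.inl h⟩


/-- **Surjectivity construction.**  For `N ≥ 2`, `N/2 < K < N`, `σ ∈ Γ_{K,2K−N}` and
`x ∈ ℤ/Nℤ`, the `K` elements `x + Σ_{j=1}^{l} (2 − σ_j)` of `ℤ/Nℤ`, `l = 0, …, K−1`, are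
pairwise distinct, and the configuration whose occupied sites are exactly these `K` elements
belongs to `ℰ_{N,K}`. -/
theorem fep_surjectivity_construction
    (N K : ℕ) [NeZero N] [NeZero K] (hN : 2 ≤ N) (h1 : N < 2 * K) (h2 : K < N)
    (σ : Conf K) (hσ : numParticles σ = 2 * K - N) (x : ZMod N) :
    Set.InjOn (partialPos σ x) (Set.Iio K) ∧
      numParticles (fun y : ZMod N => decide (∃ l < K, partialPos σ x l = y)) = K ∧
      isErgodic (fun y : ZMod N => decide (∃ l < K, partialPos σ x l = y)) := by
  have hSK : Ssum σ K = N := by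
    have := Ssum_K σ
    omega
  have hPP : ∀ l, partialPos σ x l = x + ((Ssum σ l : ℕ) : ZMod N) := fun l => rfl
  have hlt : ∀ l < K, Ssum σ l < N := by
    intro l hl
    calc Ssum σ l < Ssum σ K := Ssum_strictMono σ hl
    _ = N := hSK
  have hinj : Set.InjOn (partialPos σ x) (Set.Iio K) := by
    intro a ha b hb hab
    simp only [Set.mem_Iio] at ha hb
    rw [hPP, hPP] at hab
    have hc : ((Ssum σ a : ℕ) : ZMod N) = ((Ssum σ b : ℕ) : ZMod N) := add_left_cancel hab
    have h' : Ssum σ a = Ssum σ b := by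
      have := congrArg ZMod.val hc
      rwa [ZMod.val_cast_of_lt (hlt a ha), ZMod.val_cast_of_lt (hlt b hb)] at this
    exact (Ssum_strictMono σ).injective h'
  refine ⟨hinj, ?_, ?_⟩
  · have hset : (Finset.univ.filter
        fun y : ZMod N => (decide (∃ l < K, partialPos σ x l = y)) = true)
        = Finset.image (fun l => partialPos σ x l) (Finset.range K) := by
      ext y
      simp only [Finset.mem_filter, Finset.mem_univ, true_and, decide_eq_true_eq,
        Finset.mem_image, Finset.mem_range]
    rw [numParticles, hset,
      Finset.card_image_of_injOn (by rw [Finset.coe_range]; exact hinj),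
      Finset.card_range]
  · intro y
    simp only [decide_eq_true_eq]
    set m := (y - x).val with hmdef
    have hmN : m < N := ZMod.val_lt _
    have hyx : ((m : ℕ) : ZMod N) = y - x := by
      rw [hmdef]; simp [ZMod.natCast_val, ZMod.cast_id]
    obtain ⟨l, hlK, hcase⟩ := Ssum_near σ m (by omega)
    rcases hcase with h | h
    · left
      have hlK' : l < K := by
        rcases eq_or_lt_of_le hlK with rfl | h'
        · omega
        · exact h'
      refine ⟨l, hlK', ?_⟩
      rw [hPP, h, hyx]
      ring
    · right
      rcases eq_or_lt_of_le hlK with heq | hlK'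
      · refine ⟨0, Nat.pos_of_ne_zero (NeZero.ne K), ?_⟩
        have hmN1 : m + 1 = N := by rw [heq] at h; omega
        have hy : y = x + ((m : ℕ) : ZMod N) := by rw [hyx]; ring
        have hNm : ((m : ℕ) : ZMod N) + 1 = 0 := by
          calc ((m : ℕ) : ZMod N) + 1 = ((m + 1 : ℕ) : ZMod N) := by push_cast; ring
          _ = ((N : ℕ) : ZMod N) := by rw [hmN1]
          _ = 0 := ZMod.natCast_self N
        rw [hPP, Ssum_zero, hy]
        calc x + ((0 : ℕ) : ZMod N) = x := by simp
        _ = x + (((m : ℕ) : ZMod N) + 1) := by rw [hNm, add_zero]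
        _ = x + ((m : ℕ) : ZMod N) + 1 := by ring
      · refine ⟨l, hlK', ?_⟩
        rw [hPP, h]
        have : ((m + 1 : ℕ) : ZMod N) = ((m : ℕ) : ZMod N) + 1 := by push_cast; ring
        rw [this, hyx]
        ring

end
end

section
/- Let N ≥ 2 and N/2 < K < N be integers. The uniform probability measure ν on the finite set (ℤ/Nℤ) × Γ_{K,2K−N} is invariant for the SSEP-with-current generator: for every function g : (ℤ/Nℤ) × Γ_{K,2K−N} → ℝ, Σ_{(x,σ)} ν(x,σ) · L^{c}g(x,σ) = 0. -/
open scoped Classical BigOperators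

noncomputable section

/-- The generator of the SSEP on `ℤ/Kℤ` together with its current through the edge `(K,1)`,
tracked additively in `ℤ/Nℤ`. -/
def Lc {N K : ℕ} [NeZero N] [NeZero K] (g : ZMod N × Conf K → ℝ) (x : ZMod N) (σ : Conf K) : ℝ :=
  (∑ k ∈ Finset.Ico 1 K,
    (g (x, swapConf σ ((k : ℕ) : ZMod K) (((k + 1 : ℕ) : ℕ) : ZMod K)) - g (x, σ)))
  + (g (x + ((((if σ ((K : ℕ) : ZMod K) = true then 1 else 0)
          - (if σ ((1 : ℕ) : ZMod K) = true then 1 else 0) : ℤ)) : ZMod N),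
        swapConf σ ((K : ℕ) : ZMod K) ((1 : ℕ) : ZMod K)) - g (x, σ))

lemma swapConf_eq_comp {α : Type*} [DecidableEq α] (η : α → Bool) (a b x : α) :
    swapConf η a b x = η (Equiv.swap a b x) := by
  simp only [swapConf, Equiv.swap_apply_def]
  split_ifs <;> rfl

lemma numParticles_swapConf {K : ℕ} [NeZero K] (η : Conf K) (a b : ZMod K) :
    numParticles (swapConf η a b) = numParticles η := by
  unfold numParticles
  apply Finset.card_equiv (Equiv.swap a b)
  intro x
  simp [swapConf_eq_comp]

lemma swapConf_swapConf {α : Type*} [DecidableEq α] (η : α → Bool) (a b : α) :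
    swapConf (swapConf η a b) a b = η := by
  funext z
  simp only [swapConf]
  split_ifs with h1 h2 <;> simp_all

lemma sum_over_gamma_swap {K m : ℕ} [NeZero K] (F : Conf K → ℝ) (a b : ZMod K) :
    ∑ σ ∈ Finset.univ.filter (fun σ : Conf K => numParticles σ = m), F (swapConf σ a b)
      = ∑ σ ∈ Finset.univ.filter (fun σ : Conf K => numParticles σ = m), F σ := by
  apply Finset.sum_nbij' (i := fun σ => swapConf σ a b) (j := fun σ => swapConf σ a b)
  · intro σ hσ
    simp only [Finset.mem_filter, Finset.mem_univ, true_and] at hσ ⊢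
    rw [numParticles_swapConf, hσ]
  · intro σ hσ
    simp only [Finset.mem_filter, Finset.mem_univ, true_and] at hσ ⊢
    rw [numParticles_swapConf, hσ]
  · intro σ _; exact swapConf_swapConf σ a b
  · intro σ _; exact swapConf_swapConf σ a b
  · intro σ _; rfl

lemma sum_shift {N : ℕ} [NeZero N] (c : ZMod N) (f : ZMod N → ℝ) :
    ∑ x : ZMod N, f (x + c) = ∑ x : ZMod N, f x :=
  Fintype.sum_equiv (Equiv.addRight c) _ _ (fun _ => rfl)

/-- **Invariance of the uniform measure for the SSEP with current.**  For `N ≥ 2` and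
`N/2 < K < N`, the uniform probability measure on `(ℤ/Nℤ) × Γ_{K,2K−N}` is invariant for the
SSEP-with-current generator: `Σ_{(x,σ)} ν(x,σ) · L^{c}g(x,σ) = 0` for every `g`. -/
theorem ssep_current_uniform_invariant
    (N K : ℕ) [NeZero N] [NeZero K] (hN : 2 ≤ N) (h1 : N < 2 * K) (h2 : K < N)
    (g : ZMod N × Conf K → ℝ) :
    ∑ x : ZMod N,
      ∑ σ ∈ Finset.univ.filter (fun σ : Conf K => numParticles σ = 2 * K - N),
        (1 / ((N : ℝ) * ((Finset.univ.filter
            (fun σ : Conf K => numParticles σ = 2 * K - N)).card : ℝ))) * Lc g x σ = 0 := by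
  have hsum : ∑ x : ZMod N,
      ∑ σ ∈ Finset.univ.filter (fun σ : Conf K => numParticles σ = 2 * K - N),
        Lc g x σ = 0 := by
    have hA : ∑ x : ZMod N,
        ∑ σ ∈ Finset.univ.filter (fun σ : Conf K => numParticles σ = 2 * K - N),
          ∑ k ∈ Finset.Ico 1 K,
            (g (x, swapConf σ ((k : ℕ) : ZMod K) (((k + 1 : ℕ) : ℕ) : ZMod K)) - g (x, σ))
        = 0 := by
      apply Finset.sum_eq_zero; intro x _
      rw [Finset.sum_comm]
      apply Finset.sum_eq_zero; intro k _
      rw [Finset.sum_sub_distrib, sum_over_gamma_swap (F := fun τ => g (x, τ)), sub_self]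
    have hB : ∑ x : ZMod N,
        ∑ σ ∈ Finset.univ.filter (fun σ : Conf K => numParticles σ = 2 * K - N),
          (g (x + ((((if σ ((K : ℕ) : ZMod K) = true then 1 else 0)
                - (if σ ((1 : ℕ) : ZMod K) = true then 1 else 0) : ℤ)) : ZMod N),
              swapConf σ ((K : ℕ) : ZMod K) ((1 : ℕ) : ZMod K)) - g (x, σ))
        = 0 := by
      rw [Finset.sum_comm]
      simp only [Finset.sum_sub_distrib]
      have h1 : ∀ σ : Conf K,
          ∑ x : ZMod N, g (x + ((((if σ ((K : ℕ) : ZMod K) = true then 1 else 0)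
                - (if σ ((1 : ℕ) : ZMod K) = true then 1 else 0) : ℤ)) : ZMod N),
              swapConf σ ((K : ℕ) : ZMod K) ((1 : ℕ) : ZMod K))
            = ∑ x : ZMod N, g (x, swapConf σ ((K : ℕ) : ZMod K) ((1 : ℕ) : ZMod K)) :=
        fun σ => sum_shift _ (fun x => g (x, swapConf σ ((K : ℕ) : ZMod K) ((1 : ℕ) : ZMod K)))
      rw [Finset.sum_congr rfl (fun σ _ => h1 σ),
        sum_over_gamma_swap (F := fun τ => ∑ x : ZMod N, g (x, τ)), sub_self]
    simp only [Lc, Finset.sum_add_distrib]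
    rw [hA, hB, add_zero]
  calc _ = (1 / ((N : ℝ) * ((Finset.univ.filter
            (fun σ : Conf K => numParticles σ = 2 * K - N)).card : ℝ))) *
        ∑ x : ZMod N,
          ∑ σ ∈ Finset.univ.filter (fun σ : Conf K => numParticles σ = 2 * K - N),
            Lc g x σ := by
        rw [Finset.mul_sum]
        exact Finset.sum_congr rfl fun x _ => (Finset.mul_sum _ _ _).symm
    _ = 0 := by rw [hsum, mul_zero]

end
end

section
/- Let N ≥ 2 and N/2 < K < N be integers, set P = 2K−N, let η ∈ ℰ_{N,K} and s > 0. If there exists a clockwise segment I ⊆ ℤ/Nℤ with ||η_{|I}| − (K/N)|I|| ≥ s(K/N)√P, then there exists a clockwise segment I' ⊆ ℤ/Nℤ whose first site is occupied in η with ||η_{|I'}| − (K/N)|I'|| ≥ (K/N)(s√P − 1). -/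
open scoped Classical BigOperators

noncomputable section

/-- The clockwise segment of `ℤ/Mℤ` with first site `a` and `m` sites. -/
def cseg {M : ℕ} (a : ZMod M) (m : ℕ) : Finset (ZMod M) :=
  (Finset.range m).image (fun i => a + (i : ZMod M))

lemma cseg_sum_eq {N : ℕ} [NeZero N] (a : ZMod N) (m : ℕ) (hm : m ≤ N)
    (f : ZMod N → ℝ) : ∑ x ∈ cseg a m, f x = ∑ i ∈ Finset.range m, f (a + i) := by
  have hinj : ∀ i ∈ Finset.range m, ∀ j ∈ Finset.range m,
      a + (i : ZMod N) = a + (j : ZMod N) → i = j := by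
    intro i hi j hj hij
    simp only [Finset.mem_range] at hi hj
    have h' : (i : ZMod N) = j := add_left_cancel hij
    have := congrArg ZMod.val h'
    rwa [ZMod.val_natCast_of_lt (by omega), ZMod.val_natCast_of_lt (by omega)] at this
  have hset : cseg a m = (Finset.range m).image (fun i : ℕ => a + ((i : ℕ) : ZMod N)) := by
    ext x
    simp only [cseg, Finset.mem_image, Finset.mem_range]
    constructor
    · rintro ⟨i, hi, hix⟩
      obtain ⟨j, hj, rfl⟩ := by simpa using hi
      exact ⟨j, by simpa using hj, hix⟩
    · rintro ⟨i, hi, hix⟩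
      exact ⟨(i : ZMod N), by simp; exact ⟨i, hi, rfl⟩, hix⟩
  rw [hset, Finset.sum_image hinj]

/-- **Reduction to segments starting with a particle.**  For `N ≥ 2`, `N/2 < K < N`,
`P = 2K−N`, `η ∈ ℰ_{N,K}` and `s > 0`:  if some clockwise segment `I` satisfies
`||η_{|I}| − (K/N)|I|| ≥ s(K/N)√P`, then some clockwise segment `I'` whose first site is
occupied in `η` satisfies `||η_{|I'}| − (K/N)|I'|| ≥ (K/N)(s√P − 1)`. -/
theorem fep_fluctuation_segment_starting_particle
    (N K : ℕ) [NeZero N] (hN : 2 ≤ N) (h1 : N < 2 * K) (h2 : K < N)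
    (η : Conf N) (hη : numParticles η = K ∧ isErgodic η) (s : ℝ) (hs : 0 < s)
    (h : ∃ (a : ZMod N) (m : ℕ), 1 ≤ m ∧ m ≤ N ∧
        |(∑ x ∈ cseg a m, (if η x = true then (1 : ℝ) else 0)) - (K : ℝ) / N * m|
          ≥ s * ((K : ℝ) / N) * Real.sqrt ((2 * K - N : ℕ) : ℝ)) :
    ∃ (a : ZMod N) (m : ℕ), 1 ≤ m ∧ m ≤ N ∧ η a = true ∧
      |(∑ x ∈ cseg a m, (if η x = true then (1 : ℝ) else 0)) - (K : ℝ) / N * m|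
        ≥ (K : ℝ) / N * (s * Real.sqrt ((2 * K - N : ℕ) : ℝ) - 1) := by
  obtain ⟨hK, herg⟩ := hη
  obtain ⟨a, m, hm1, hmN, hbig⟩ := h
  have hN0 : (0:ℝ) < N := by positivity
  have hK0 : (0:ℝ) < K := by
    have : 0 < K := by omega
    exact_mod_cast this
  have hKN : (0:ℝ) < (K:ℝ)/N := by positivity
  have hsqrt : 0 ≤ Real.sqrt ((2 * K - N : ℕ) : ℝ) := Real.sqrt_nonneg _
  set P := Real.sqrt ((2 * K - N : ℕ) : ℝ) with hP
  by_cases ha : η a = true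
  · refine ⟨a, m, hm1, hmN, ha, le_trans ?_ hbig⟩
    nlinarith
  · have ha1 : η (a + 1) = true := (herg a).resolve_left ha
    set f : ZMod N → ℝ := fun x => if η x = true then (1 : ℝ) else 0 with hf
    have hfa : f a = 0 := by simp [hf, ha]
    rcases eq_or_lt_of_le hm1 with hm | hm
    · -- m = 1, then K/N ≥ s (K/N) P so s*P ≤ 1, RHS ≤ 0
      have hs1 : ∑ x ∈ cseg a m, f x = 0 := by
        rw [cseg_sum_eq a m hmN, ← hm, Finset.sum_range_one]
        simpa using hfa
      rw [hs1, ← hm] at hbig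
      have h1' : |0 - (K:ℝ)/N * (1:ℕ)| = (K:ℝ)/N := by
        rw [abs_of_nonpos (by push_cast; nlinarith)]; push_cast; ring
      rw [h1'] at hbig
      have hsP : s * P ≤ 1 := by nlinarith
      refine ⟨a + 1, 1, le_refl 1, by omega, ha1, le_trans ?_ (abs_nonneg _)⟩
      nlinarith
    · -- m ≥ 2: use segment starting at a+1 of length m-1
      refine ⟨a + 1, m - 1, by omega, by omega, ha1, ?_⟩
      have hsum : ∑ x ∈ cseg a m, f x = ∑ x ∈ cseg (a+1) (m-1), f x := by
        rw [cseg_sum_eq a m hmN, cseg_sum_eq (a+1) (m-1) (by omega)]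
        have hm' : m = (m - 1) + 1 := by omega
        conv_lhs => rw [hm', Finset.sum_range_succ']
        have : ∀ i, a + ((i + 1 : ℕ) : ZMod N) = (a + 1) + (i : ℕ) := by
          intro i; push_cast; ring
        simp only [this, Nat.cast_zero, add_zero, hfa]
      rw [← hsum]
      have hcast : ((m - 1 : ℕ) : ℝ) = (m : ℝ) - 1 := by
        have : (1:ℕ) ≤ m := hm1
        push_cast [this]; ring
      rw [hcast]
      set S := ∑ x ∈ cseg a m, f x with hS
      have key : |S - (K:ℝ)/N * ((m:ℝ) - 1)| ≥ |S - (K:ℝ)/N * m| - (K:ℝ)/N := by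
        have : S - (K:ℝ)/N * ((m:ℝ) - 1) = (S - (K:ℝ)/N * m) + (K:ℝ)/N := by ring
        rw [this]
        have := abs_add_le (S - (K:ℝ)/N * m + (K:ℝ)/N) (-((K:ℝ)/N))
        simp only [add_neg_cancel_right, abs_neg] at this
        rw [abs_of_pos hKN] at this
        linarith
      have : s * ((K:ℝ)/N) * P - (K:ℝ)/N ≤ |S - (K:ℝ)/N * m| - (K:ℝ)/N := by linarith
      calc (K:ℝ)/N * (s * P - 1) = s * ((K:ℝ)/N) * P - (K:ℝ)/N := by ring
        _ ≤ |S - (K:ℝ)/N * m| - (K:ℝ)/N := this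
        _ ≤ |S - (K:ℝ)/N * ((m:ℝ) - 1)| := by linarith

end
end
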